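/- arXiv:2401.00598 — 13 statements merged into one kernel-verified Lean document; each statement's English description precedes it below -/
import Mathlib

section
/- Let X and Y be compact Hausdorff spaces and let π : Y → X be an irreducible continuous surjection. Then for every U ∈ Ropen(Y), the set int(π(cl(U))) belongs to Ropen(X), and the map Ψ : Ropen(Y) → Ropen(X) defined by Ψ(U) = int(π(cl(U))) is a Boolean algebra isomorphism (equivalently, an order isomorphism for inclusion) whose inverse is the map Φ : Ropen(X) → Ropen(Y) given by Φ(V) = int(cl(π⁻¹(V))). -/
open Set Topology

/-- The regular open subsets of a topological space, ordered by inclusion. -/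
abbrev Ropen (Z : Type*) [TopologicalSpace Z] : Type _ :=
  {U : Set Z // U = interior (closure U)}

section AuxGeneral

variable {Z : Type*} [TopologicalSpace Z]

lemma aux_disj {s t : Set Z} (hs : IsOpen s) (h : s ∩ t = ∅) : s ∩ closure t = ∅ := by
  have ht : t ⊆ sᶜ := fun x hxt hxs => (h ▸ (⟨hxs, hxt⟩ : x ∈ s ∩ t) : x ∈ (∅ : Set Z))
  have hcl : closure t ⊆ sᶜ := closure_minimal ht hs.isClosed_compl
  rw [Set.eq_empty_iff_forall_notMem]
  rintro x ⟨hxs, hxt⟩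
  exact hcl hxt hxs

lemma aux_isClosed_regop {T : Set Z} (hT : IsClosed T) :
    interior T = interior (closure (interior T)) :=
  subset_antisymm (interior_maximal subset_closure isOpen_interior)
    (interior_mono (closure_minimal interior_subset hT))

lemma aux_intcl_regop (A : Set Z) :
    interior (closure A) = interior (closure (interior (closure A))) :=
  subset_antisymm (interior_maximal subset_closure isOpen_interior)
    (interior_mono (closure_minimal interior_subset isClosed_closure))

end AuxGeneral

section AuxIrr

variable {X Y : Type*} [TopologicalSpace X] [TopologicalSpace Y]
  [CompactSpace X] [T2Space X] [CompactSpace Y] [T2Space Y] {π : Y → X}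

/-- The set of points of `X` whose fiber is contained in `G`. -/
def sharp (π : Y → X) (G : Set Y) : Set X := (π '' Gᶜ)ᶜ

lemma sharp_isOpen (hcont : Continuous π) {G : Set Y} (hG : IsOpen G) :
    IsOpen (sharp π G) :=
  (hcont.isClosedMap _ hG.isClosed_compl).isOpen_compl

lemma preimage_sharp_subset {G : Set Y} : π ⁻¹' (sharp π G) ⊆ G := fun y hy => by
  by_contra h; exact hy ⟨y, h, rfl⟩

lemma sharp_mono {G H : Set Y} (h : G ⊆ H) : sharp π G ⊆ sharp π H :=
  compl_subset_compl.2 (Set.image_mono (compl_subset_compl.2 h))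

lemma sharp_subset_image (hsurj : Function.Surjective π) {G : Set Y} :
    sharp π G ⊆ π '' G := fun x hx => by
  obtain ⟨y, rfl⟩ := hsurj x
  exact ⟨y, by_contra fun h => hx ⟨y, h, rfl⟩, rfl⟩

lemma sharp_nonempty
    (hirr : ∀ F : Set Y, IsClosed F → π '' F = Set.univ → F = Set.univ)
    {G : Set Y} (hG : IsOpen G) (hne : G.Nonempty) : (sharp π G).Nonempty := by
  rw [Set.nonempty_iff_ne_empty]
  intro h
  have h1 : π '' Gᶜ = Set.univ := by
    have := congrArg compl h
    simpa [sharp] using this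
  have h2 := hirr Gᶜ hG.isClosed_compl h1
  have : G = ∅ := by
    rw [← compl_univ, ← h2, compl_compl]
  exact hne.ne_empty this

lemma dense_sharp (hcont : Continuous π) (hsurj : Function.Surjective π)
    (hirr : ∀ F : Set Y, IsClosed F → π '' F = Set.univ → F = Set.univ)
    {G : Set Y} (hG : IsOpen G) :
    G ⊆ closure (π ⁻¹' (sharp π G)) := by
  intro y hy
  rw [mem_closure_iff]
  intro N hN hyN
  obtain ⟨x, hx⟩ := sharp_nonempty hirr (hG.inter hN) ⟨y, hy, hyN⟩
  obtain ⟨y', rfl⟩ := hsurj x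
  have h1 : y' ∈ G ∩ N := preimage_sharp_subset hx
  exact ⟨y', h1.2, sharp_mono Set.inter_subset_left hx⟩

lemma image_closure_eq (hcont : Continuous π) (A : Set Y) :
    π '' closure A = closure (π '' A) :=
  subset_antisymm (image_closure_subset_closure_image hcont)
    (closure_minimal (Set.image_mono subset_closure)
      (hcont.isClosedMap _ isClosed_closure))

lemma closure_sharp_eq (hcont : Continuous π) (hsurj : Function.Surjective π)
    (hirr : ∀ F : Set Y, IsClosed F → π '' F = Set.univ → F = Set.univ)
    {G : Set Y} (hG : IsOpen G) :
    closure (π '' G) = closure (sharp π G) := by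
  apply subset_antisymm
  · apply closure_minimal ?_ isClosed_closure
    rintro x ⟨y, hyG, rfl⟩
    rw [mem_closure_iff]
    intro N hN hxN
    obtain ⟨x', hx'⟩ := sharp_nonempty hirr (hG.inter (hN.preimage hcont)) ⟨y, hyG, hxN⟩
    refine ⟨x', ?_, sharp_mono Set.inter_subset_left hx'⟩
    obtain ⟨y', hy', rfl⟩ := sharp_subset_image hsurj hx'
    exact hy'.2
  · exact closure_mono (sharp_subset_image hsurj)

lemma psi_eq (hcont : Continuous π) (hsurj : Function.Surjective π)
    (hirr : ∀ F : Set Y, IsClosed F → π '' F = Set.univ → F = Set.univ)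
    {G : Set Y} (hG : IsOpen G) :
    interior (π '' closure G) = interior (closure (sharp π G)) := by
  rw [image_closure_eq hcont, closure_sharp_eq hcont hsurj hirr hG]

lemma phi_psi_ge (hcont : Continuous π) (hsurj : Function.Surjective π)
    (hirr : ∀ F : Set Y, IsClosed F → π '' F = Set.univ → F = Set.univ)
    {U : Set Y} (hU : IsOpen U) :
    U ⊆ interior (closure (π ⁻¹' (interior (π '' closure U)))) := by
  have h1 : sharp π U ⊆ interior (π '' closure U) :=
    interior_maximal ((sharp_subset_image hsurj).trans
      (Set.image_mono subset_closure)) (sharp_isOpen hcont hU)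
  exact interior_maximal ((dense_sharp hcont hsurj hirr hU).trans
    (closure_mono (Set.preimage_mono h1))) hU

lemma phi_psi_le (hcont : Continuous π) (hsurj : Function.Surjective π)
    (hirr : ∀ F : Set Y, IsClosed F → π '' F = Set.univ → F = Set.univ)
    {U : Set Y} (hU : U = interior (closure U)) :
    interior (closure (π ⁻¹' (interior (π '' closure U)))) ⊆ U := by
  have hUo : IsOpen U := hU ▸ isOpen_interior
  have key : π ⁻¹' (interior (π '' closure U)) ⊆ closure U := by
    intro y hy
    by_contra hyU
    have hHo : IsOpen (closure U)ᶜ := isClosed_closure.isOpen_compl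
    -- π y is in the closure of `sharp π (closure U)ᶜ`
    have h1 : π y ∈ closure (sharp π (closure U)ᶜ) := by
      have h2 : y ∈ closure (π ⁻¹' (sharp π (closure U)ᶜ)) :=
        dense_sharp hcont hsurj hirr hHo hyU
      have h3 : π y ∈ π '' closure (π ⁻¹' (sharp π (closure U)ᶜ)) := ⟨y, h2, rfl⟩
      have h4 := (image_closure_subset_closure_image hcont) h3
      exact closure_mono (Set.image_preimage_subset π _) h4
    -- π y is in the interior of the closure of `sharp π U`
    have h5 : π y ∈ interior (closure (sharp π U)) := by
      rwa [psi_eq hcont hsurj hirr hUo] at hy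
    -- but these two sets are disjoint
    have hdisj : sharp π (closure U)ᶜ ∩ sharp π U = ∅ := by
      rw [Set.eq_empty_iff_forall_notMem]
      rintro x ⟨hxH, hxU⟩
      obtain ⟨y0, rfl⟩ := hsurj x
      exact (preimage_sharp_subset hxH) (subset_closure (preimage_sharp_subset hxU))
    have h6 : sharp π (closure U)ᶜ ∩ closure (sharp π U) = ∅ :=
      aux_disj (sharp_isOpen hcont hHo) hdisj
    have h7 : interior (closure (sharp π U)) ∩ closure (sharp π (closure U)ᶜ) = ∅ := by
      apply aux_disj isOpen_interior
      rw [Set.eq_empty_iff_forall_notMem]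
      rintro x ⟨hx1, hx2⟩
      exact (Set.eq_empty_iff_forall_notMem.1 h6) x ⟨hx2, interior_subset hx1⟩
    exact (Set.eq_empty_iff_forall_notMem.1 h7) (π y) ⟨h5, h1⟩
  calc interior (closure (π ⁻¹' (interior (π '' closure U))))
      ⊆ interior (closure (closure U)) := interior_mono (closure_mono key)
    _ = U := by rw [closure_closure, ← hU]

lemma psi_phi_ge (hcont : Continuous π) (hsurj : Function.Surjective π)
    {V : Set X} (hV : IsOpen V) :
    V ⊆ interior (π '' closure (interior (closure (π ⁻¹' V)))) := by
  apply interior_maximal ?_ hV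
  have h1 : π ⁻¹' V ⊆ closure (interior (closure (π ⁻¹' V))) :=
    (interior_maximal subset_closure (hV.preimage hcont)).trans subset_closure
  calc V = π '' (π ⁻¹' V) := (Set.image_preimage_eq V hsurj).symm
    _ ⊆ π '' closure (interior (closure (π ⁻¹' V))) := Set.image_mono h1

lemma phi_reflect (hcont : Continuous π) (hsurj : Function.Surjective π)
    {V V' : Set X} (hV : V = interior (closure V)) (hV' : V' = interior (closure V'))
    (h : interior (closure (π ⁻¹' V)) ⊆ interior (closure (π ⁻¹' V'))) : V ⊆ V' := by
  by_contra hVV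
  have hVo : IsOpen V := hV ▸ isOpen_interior
  have hnsub : ¬ (V ⊆ closure V') := fun hsub => hVV (hV' ▸ interior_maximal hsub hVo)
  obtain ⟨x, hxV, hxV'⟩ := Set.not_subset.1 hnsub
  set W := V ∩ (closure V')ᶜ with hW
  have hWo : IsOpen W := hVo.inter isClosed_closure.isOpen_compl
  obtain ⟨y, hy⟩ := hsurj x
  have hyW : y ∈ π ⁻¹' W := by
    simp only [Set.mem_preimage, hy]
    exact ⟨hxV, hxV'⟩
  have h1 : y ∈ closure (π ⁻¹' V') := by
    have : π ⁻¹' V ⊆ interior (closure (π ⁻¹' V)) :=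
      interior_maximal subset_closure (hVo.preimage hcont)
    exact interior_subset (h (this (Set.inter_subset_left hyW)))
  have h2 : π ⁻¹' W ∩ closure (π ⁻¹' V') = ∅ := by
    apply aux_disj (hWo.preimage hcont)
    rw [← Set.preimage_inter]
    have : W ∩ V' = ∅ := by
      rw [Set.eq_empty_iff_forall_notMem]
      rintro z ⟨⟨_, hz1⟩, hz2⟩
      exact hz1 (subset_closure hz2)
    rw [this, Set.preimage_empty]
  exact (Set.eq_empty_iff_forall_notMem.1 h2) y ⟨hyW, h1⟩

end AuxIrr

/-- If `π : Y → X` is an irreducible continuous surjection between compact Hausdorff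
spaces, then `U ↦ int(π(cl U))` maps regular open sets to regular open sets, and it is
an order (Boolean algebra) isomorphism `Ropen(Y) ≃ Ropen(X)` with inverse
`V ↦ int(cl(π⁻¹ V))`. -/
theorem stmt0 {X Y : Type*} [TopologicalSpace X] [TopologicalSpace Y]
    [CompactSpace X] [T2Space X] [CompactSpace Y] [T2Space Y]
    (π : Y → X) (hcont : Continuous π) (hsurj : Function.Surjective π)
    (hirr : ∀ F : Set Y, IsClosed F → π '' F = Set.univ → F = Set.univ) :
    (∀ U : Set Y, U = interior (closure U) →
      interior (π '' closure U) = interior (closure (interior (π '' closure U)))) ∧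
    ∃ Ψ : Ropen Y ≃o Ropen X,
      (∀ U : Ropen Y, (Ψ U : Set X) = interior (π '' closure (U : Set Y))) ∧
      (∀ V : Ropen X, (Ψ.symm V : Set Y) = interior (closure (π ⁻¹' (V : Set X)))) := by
  have regop : ∀ A : Set Y, interior (π '' closure A) =
      interior (closure (interior (π '' closure A))) := fun A =>
    aux_isClosed_regop (hcont.isClosedMap _ isClosed_closure)
  refine ⟨fun U _ => regop U, ?_⟩
  set Ψf : Ropen Y → Ropen X := fun U => ⟨interior (π '' closure U.1), regop U.1⟩ with hΨf
  set Φf : Ropen X → Ropen Y :=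
    fun V => ⟨interior (closure (π ⁻¹' V.1)), aux_intcl_regop _⟩ with hΦf
  have hopenY : ∀ U : Ropen Y, IsOpen U.1 := fun U => U.2 ▸ isOpen_interior
  have hopenX : ∀ V : Ropen X, IsOpen V.1 := fun V => V.2 ▸ isOpen_interior
  have left : ∀ U : Ropen Y, Φf (Ψf U) = U := fun U => Subtype.ext <|
    subset_antisymm (phi_psi_le hcont hsurj hirr U.2)
      (phi_psi_ge hcont hsurj hirr (hopenY U))
  have Φmono : ∀ {V V' : Ropen X}, V.1 ⊆ V'.1 → (Φf V).1 ⊆ (Φf V').1 := fun h =>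
    interior_mono (closure_mono (Set.preimage_mono h))
  have Ψmono : ∀ {U U' : Ropen Y}, U.1 ⊆ U'.1 → (Ψf U).1 ⊆ (Ψf U').1 := fun h =>
    interior_mono (Set.image_mono (closure_mono h))
  have right : ∀ V : Ropen X, Ψf (Φf V) = V := by
    intro V
    have h1 : Φf (Ψf (Φf V)) = Φf V := left (Φf V)
    apply Subtype.ext
    apply subset_antisymm
    · exact phi_reflect hcont hsurj (Ψf (Φf V)).2 V.2
        (congrArg Subtype.val h1).subset
    · exact psi_phi_ge hcont hsurj (hopenX V)
  refine ⟨⟨⟨Ψf, Φf, left, right⟩, ?_⟩, fun U => rfl, fun V => rfl⟩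
  intro U U'
  constructor
  · intro h
    have h2 : (Φf (Ψf U)).1 ⊆ (Φf (Ψf U')).1 := Φmono h
    rw [left U, left U'] at h2
    exact h2
  · exact fun h => Ψmono h
end

section
/- Every compact Hausdorff space X admits a projective cover: there exist an extremally disconnected compact Hausdorff space P and a continuous surjection f : P → X that is irreducible, i.e., no proper closed subset of P is mapped onto X by f. -/
open Set Topology

/-- `Ultrafilter X` is projective among compact Hausdorff spaces. -/
lemma ultrafilter_projective (X : Type u) : CompactT2.Projective (Ultrafilter X) := by
  intro Y Z _tsY _tsZ _csY _t2Y _csZ _t2Z f g hf hg g_sur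
  let s : Z → Y := fun z => Classical.choose <| g_sur z
  have hs : g ∘ s = id := funext fun z => Classical.choose_spec (g_sur z)
  let t := s ∘ f ∘ (pure : X → Ultrafilter X)
  let h : Ultrafilter X → Y := Ultrafilter.extend t
  have hh : Continuous h := continuous_ultrafilter_extend t
  refine ⟨h, hh, denseRange_pure.equalizer (hg.comp hh) hf ?_⟩
  rw [Function.comp_assoc, ultrafilter_extend_extends, ← Function.comp_assoc, hs,
    Function.id_comp]

/-- A minimal closed subset mapping onto `X`, inside an extremally disconnected
compact Hausdorff space, is extremally disconnected. -/
lemma minimal_set_extremallyDisconnected {D X : Type u} [TopologicalSpace D] [TopologicalSpace X]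
    [CompactSpace D] [T2Space D] [ExtremallyDisconnected D] [T2Space X]
    {π : D → X} (π_cont : Continuous π) {E : Set D} [CompactSpace E]
    (E_onto : π '' E = univ)
    (E_min : ∀ E₀ : Set E, E₀ ≠ univ → IsClosed E₀ → E.restrict π '' E₀ ≠ univ) :
    ExtremallyDisconnected E := by
  set ρ : E → X := E.restrict π with hρ
  have ρ_cont : Continuous ρ := π_cont.comp continuous_subtype_val
  have ρ_surj : Function.Surjective ρ := by
    intro x
    have : x ∈ π '' E := E_onto ▸ mem_univ x
    rcases this with ⟨d, hd, hdx⟩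
    exact ⟨⟨d, hd⟩, hdx⟩
  -- key claim : for open U ⊆ E, the image of U in D is contained in the closure of
  -- π ⁻¹' ((ρ '' Uᶜ)ᶜ)
  have key : ∀ U : Set E, IsOpen U →
      (Subtype.val '' U : Set D) ⊆ closure (π ⁻¹' ((ρ '' Uᶜ)ᶜ)) := by
    intro U hU
    rintro d ⟨p, hpU, rfl⟩
    rw [mem_closure_iff]
    intro N N_open hN
    -- U' := U ∩ (val ⁻¹' N) is a nonempty open subset of E
    set U' : Set E := U ∩ (Subtype.val ⁻¹' N) with hU'
    have U'_open : IsOpen U' := hU.inter (N_open.preimage continuous_subtype_val)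
    have hpU' : p ∈ U' := ⟨hpU, hN⟩
    have h1 : U'ᶜ ≠ univ := by
      intro h
      have := (h ▸ mem_univ p : p ∈ U'ᶜ)
      exact this hpU'
    have h2 : ρ '' U'ᶜ ≠ univ := E_min _ h1 U'_open.isClosed_compl
    rcases nonempty_compl.mpr h2 with ⟨x, hx⟩
    rcases ρ_surj x with ⟨q, rfl⟩
    have hqU' : q ∈ U' := by
      by_contra hq
      exact hx (mem_image_of_mem ρ hq)
    refine ⟨(q : D), ⟨hqU'.2, ?_⟩⟩
    show π (q : D) ∈ (ρ '' Uᶜ)ᶜ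
    intro hmem
    exact hx (image_mono (f := ρ) (compl_subset_compl.mpr (inter_subset_left)) hmem)
  -- disjoint opens in E have disjoint closures
  have disj_closure : ∀ U G : Set E, IsOpen U → IsOpen G → Disjoint U G →
      Disjoint (closure U) (closure G) := by
    intro U G hUo hGo hUG
    -- the open sets (ρ '' Uᶜ)ᶜ and (ρ '' Gᶜ)ᶜ in X are disjoint
    have hUc : IsClosed (ρ '' Uᶜ) :=
      (hUo.isClosed_compl.isCompact.image ρ_cont).isClosed
    have hGc : IsClosed (ρ '' Gᶜ) :=
      (hGo.isClosed_compl.isCompact.image ρ_cont).isClosed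
    have hdisj : Disjoint ((ρ '' Uᶜ)ᶜ) ((ρ '' Gᶜ)ᶜ) := by
      rw [disjoint_compl_left_iff_subset]
      intro x hx
      rcases ρ_surj x with ⟨q, rfl⟩
      by_cases hq : q ∈ U
      · have hqG : q ∈ Gᶜ := fun hmem => (disjoint_left.mp hUG) hq hmem
        exact absurd (mem_image_of_mem ρ hqG) hx
      · exact mem_image_of_mem ρ hq
    -- pull back to D, use extremal disconnectedness of D
    have hDdisj : Disjoint (closure (π ⁻¹' ((ρ '' Uᶜ)ᶜ))) (closure (π ⁻¹' ((ρ '' Gᶜ)ᶜ))) :=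
      ExtremallyDisconnected.disjoint_closure_of_disjoint_isOpen
        (hdisj.preimage π)
        (hUc.isOpen_compl.preimage π_cont) (hGc.isOpen_compl.preimage π_cont)
    have hcu : closure U ⊆ Subtype.val ⁻¹' (closure (π ⁻¹' ((ρ '' Uᶜ)ᶜ))) := by
      rw [IsEmbedding.subtypeVal.closure_eq_preimage_closure_image]
      exact preimage_mono (closure_mono (key U hUo) |>.trans (by rw [closure_closure]))
    have hcg : closure G ⊆ Subtype.val ⁻¹' (closure (π ⁻¹' ((ρ '' Gᶜ)ᶜ))) := by
      rw [IsEmbedding.subtypeVal.closure_eq_preimage_closure_image]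
      exact preimage_mono (closure_mono (key G hGo) |>.trans (by rw [closure_closure]))
    exact Disjoint.mono hcu hcg (hDdisj.preimage _)
  constructor
  intro U hU
  have hG : IsOpen ((closure U)ᶜ) := isClosed_closure.isOpen_compl
  have hdisj : Disjoint U ((closure U)ᶜ) :=
    disjoint_compl_right.mono_left subset_closure
  have h := disj_closure U ((closure U)ᶜ) hU hG hdisj
  have : closure U = (closure ((closure U)ᶜ))ᶜ := by
    apply Subset.antisymm
    · exact subset_compl_iff_disjoint_right.mpr h
    · intro x hx
      by_contra hxc
      exact hx (subset_closure hxc)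
  rw [this]
  exact isClosed_closure.isOpen_compl

/-- Every compact Hausdorff space admits a projective (Gleason) cover: there exist an
extremally disconnected compact Hausdorff space `P` and an irreducible continuous
surjection `f : P → X`. -/
theorem stmt2 {X : Type u} [TopologicalSpace X] [CompactSpace X] [T2Space X] :
    ∃ (P : Type u) (_ : TopologicalSpace P), CompactSpace P ∧ T2Space P ∧
      ExtremallyDisconnected P ∧
      ∃ f : P → X, Continuous f ∧ Function.Surjective f ∧
        ∀ F : Set P, IsClosed F → f '' F = Set.univ → F = Set.univ := by
  -- the Stone–Čech compactification of `X` viewed as a discrete space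
  let D := Ultrafilter X
  haveI : ExtremallyDisconnected D :=
    CompactT2.Projective.extremallyDisconnected (ultrafilter_projective X)
  let π : D → X := Ultrafilter.extend id
  have π_cont : Continuous π := continuous_ultrafilter_extend id
  have π_surj : Function.Surjective π := fun x =>
    ⟨pure x, congr_fun (ultrafilter_extend_extends (id : X → X)) x⟩
  obtain ⟨E, E_cpt, E_onto, E_min⟩ := exists_compact_surjective_zorn_subset π_cont π_surj
  haveI := E_cpt
  refine ⟨E, inferInstance, E_cpt, inferInstance,
    minimal_set_extremallyDisconnected π_cont E_onto E_min,
    E.restrict π, π_cont.comp continuous_subtype_val, ?_, ?_⟩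
  · intro x
    have : x ∈ π '' E := E_onto ▸ mem_univ x
    rcases this with ⟨d, hd, hdx⟩
    exact ⟨⟨d, hd⟩, hdx⟩
  · intro F F_closed F_onto
    by_contra hF
    exact E_min F hF F_closed F_onto
end

section
/- Let X be a compact Hausdorff space and let (P, f) be a projective cover of X. Then for every V ∈ Ropen(X) the set cl(f⁻¹(V)) belongs to Ropen(P) (it is clopen), for every E ∈ Ropen(P) the set int(f(E)) belongs to Ropen(X), and the maps Φ : Ropen(X) → Ropen(P), Φ(V) = cl(f⁻¹(V)), and Ψ : Ropen(P) → Ropen(X), Ψ(E) = int(f(E)), are mutually inverse Boolean algebra isomorphisms (equivalently, mutually inverse order isomorphisms). -/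
open Set Topology

set_option linter.unusedSectionVars false
section Aux
variable {X P : Type*} [TopologicalSpace X] [CompactSpace X] [T2Space X]
    [TopologicalSpace P] [CompactSpace P] [T2Space P] [ExtremallyDisconnected P]
    {f : P → X} (hcont : Continuous f) (hsurj : Function.Surjective f)
    (hirr : ∀ F : Set P, IsClosed F → f '' F = Set.univ → F = Set.univ)

include hcont in
lemma fClosed : IsClosedMap f := fun _ hs => (hs.isCompact.image hcont).isClosed

include hirr in
lemma irr' (W : Set P) (hW : IsOpen W) (hne : W.Nonempty) :
    ∃ x, f ⁻¹' {x} ⊆ W := by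
  by_contra h
  push_neg at h
  have huniv : f '' Wᶜ = univ := by
    ext x
    simp only [mem_univ, iff_true, mem_image]
    obtain ⟨p, hp, hpW⟩ := not_subset.mp (h x)
    exact ⟨p, hpW, hp⟩
  have h2 := hirr Wᶜ hW.isClosed_compl huniv
  rw [compl_univ_iff] at h2
  exact hne.ne_empty h2

lemma clopen_of_ro (E : Set P) (hE : E = interior (closure E)) : IsClopen E := by
  have hEo : IsOpen E := hE ▸ isOpen_interior
  have hco : IsOpen (closure E) := ExtremallyDisconnected.open_closure E hEo
  have hEc : E = closure E := by
    conv_lhs => rw [hE]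
    rw [hco.interior_eq]
  refine ⟨?_, hEo⟩
  exact isClosed_of_closure_subset hEc.ge

lemma ro_int_closed {C : Set X} (hC : IsClosed C) :
    interior C = interior (closure (interior C)) := by
  apply subset_antisymm
  · exact interior_maximal subset_closure isOpen_interior
  · exact interior_mono (closure_minimal interior_subset hC)

include hcont hsurj in
lemma psiphi (V : Set X) (hV : V = interior (closure V)) :
    interior (f '' closure (f ⁻¹' V)) = V := by
  have him : f '' closure (f ⁻¹' V) = closure V := by
    apply subset_antisymm
    · calc f '' closure (f ⁻¹' V) ⊆ closure (f '' (f ⁻¹' V)) :=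
            image_closure_subset_closure_image hcont
        _ = closure V := by rw [image_preimage_eq V hsurj]
    · apply closure_minimal
      · exact (image_preimage_eq V hsurj).ge.trans (image_mono (f := f) subset_closure)
      · exact fClosed hcont _ isClosed_closure
  rw [him, ← hV]

include hcont hsurj hirr in
lemma phipsi (E : Set P) (hE : IsClopen E) :
    closure (f ⁻¹' (interior (f '' E))) = E := by
  set U : Set P := f ⁻¹' (interior (f '' E)) with hU
  have hUo : IsOpen U := isOpen_interior.preimage hcont
  apply subset_antisymm
  · -- closure U ⊆ E : suffices U ⊆ E
    apply closure_minimal _ hE.isClosed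
    intro p hp
    by_contra hpE
    have hWne : (U ∩ Eᶜ).Nonempty := ⟨p, hp, hpE⟩
    obtain ⟨x, hx⟩ := irr' hirr (U ∩ Eᶜ) (hUo.inter hE.isClosed.isOpen_compl) hWne
    obtain ⟨q, hq⟩ := hsurj x
    have hqW : q ∈ U ∩ Eᶜ := hx (by simp [hq])
    have hxE : x ∈ f '' E := by
      have : f q ∈ interior (f '' E) := hqW.1
      rw [hq] at this
      exact interior_subset this
    obtain ⟨p', hp'E, hp'x⟩ := hxE
    exact (hx (by simp [hp'x]) : p' ∈ U ∩ Eᶜ).2 hp'E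
  · -- E ⊆ closure U
    intro p hpE
    rw [mem_closure_iff]
    intro N hN hpN
    have hne : (N ∩ E).Nonempty := ⟨p, hpN, hpE⟩
    obtain ⟨x, hx⟩ := irr' hirr (N ∩ E) (hN.inter hE.isOpen) hne
    -- x ∉ f '' Eᶜ, so x ∈ E* ⊆ interior (f '' E)
    have hEstar : IsOpen (f '' Eᶜ)ᶜ := (fClosed hcont _ hE.isOpen.isClosed_compl).isOpen_compl
    have hsub : (f '' Eᶜ)ᶜ ⊆ f '' E := by
      intro y hy
      obtain ⟨q, hq⟩ := hsurj y
      by_cases hqE : q ∈ E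
      · exact ⟨q, hqE, hq⟩
      · exact absurd ⟨q, hqE, hq⟩ hy
    have hxstar : x ∈ (f '' Eᶜ)ᶜ := by
      rintro ⟨p', hp'E, hp'x⟩
      exact hp'E ((hx (by simp [hp'x])).2)
    have hxint : x ∈ interior (f '' E) := interior_maximal hsub hEstar hxstar
    obtain ⟨q, hq⟩ := hsurj x
    have hqNE : q ∈ N ∩ E := hx (by simp [hq])
    exact ⟨q, hqNE.1, by simpa [hU, hq] using hxint⟩

end Aux

/-- Let `(P, f)` be a projective cover of a compact Hausdorff space `X` (so `P` is
extremally disconnected compact Hausdorff and `f` is an irreducible continuous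
surjection).  Then `V ↦ cl(f⁻¹ V)` carries `Ropen(X)` into `Ropen(P)` (with clopen
values), `E ↦ int(f(E))` carries `Ropen(P)` into `Ropen(X)`, and these maps are mutually
inverse order (Boolean algebra) isomorphisms. -/
theorem stmt4 {X P : Type*} [TopologicalSpace X] [CompactSpace X] [T2Space X]
    [TopologicalSpace P] [CompactSpace P] [T2Space P] [ExtremallyDisconnected P]
    (f : P → X) (hcont : Continuous f) (hsurj : Function.Surjective f)
    (hirr : ∀ F : Set P, IsClosed F → f '' F = Set.univ → F = Set.univ) :
    (∀ V : Set X, V = interior (closure V) →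
      IsClopen (closure (f ⁻¹' V)) ∧
      closure (f ⁻¹' V) = interior (closure (closure (f ⁻¹' V)))) ∧
    (∀ E : Set P, E = interior (closure E) →
      interior (f '' E) = interior (closure (interior (f '' E)))) ∧
    ∃ Φ : Ropen X ≃o Ropen P,
      (∀ V : Ropen X, (Φ V : Set P) = closure (f ⁻¹' (V : Set X))) ∧
      (∀ E : Ropen P, (Φ.symm E : Set X) = interior (f '' (E : Set P))) := by
  have hclopen : ∀ V : Set X, V = interior (closure V) → IsClopen (closure (f ⁻¹' V)) := by
    intro V hV
    have hVo : IsOpen V := hV ▸ isOpen_interior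
    exact ⟨isClosed_closure,
      ExtremallyDisconnected.open_closure _ (hVo.preimage hcont)⟩
  have part1 : ∀ V : Set X, V = interior (closure V) →
      IsClopen (closure (f ⁻¹' V)) ∧
      closure (f ⁻¹' V) = interior (closure (closure (f ⁻¹' V))) := by
    intro V hV
    have hc := hclopen V hV
    refine ⟨hc, ?_⟩
    rw [closure_closure, hc.isOpen.interior_eq]
  have part2 : ∀ E : Set P, E = interior (closure E) →
      interior (f '' E) = interior (closure (interior (f '' E))) := by
    intro E hE
    exact ro_int_closed
      ((clopen_of_ro E hE).isClosed.isCompact.image hcont).isClosed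
  refine ⟨part1, part2, ?_⟩
  have key1 : ∀ V : Ropen X,
      interior (f '' closure (f ⁻¹' (V : Set X))) = (V : Set X) :=
    fun V => psiphi hcont hsurj _ V.2
  have key2 : ∀ E : Ropen P,
      closure (f ⁻¹' interior (f '' (E : Set P))) = (E : Set P) :=
    fun E => phipsi hcont hsurj hirr _ (clopen_of_ro _ E.2)
  refine ⟨⟨⟨fun V => ⟨closure (f ⁻¹' (V : Set X)), (part1 _ V.2).2⟩,
      fun E => ⟨interior (f '' (E : Set P)), part2 _ E.2⟩, ?_, ?_⟩, ?_⟩, fun V => rfl, fun E => rfl⟩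
  · intro V
    ext1
    exact key1 V
  · intro E
    ext1
    exact key2 E
  · intro V W
    constructor
    · intro h
      have h' : closure (f ⁻¹' (V : Set X)) ⊆ closure (f ⁻¹' (W : Set X)) := h
      have := interior_mono (image_mono (f := f) h')
      rw [key1 V, key1 W] at this
      exact this
    · intro h
      exact Subtype.coe_le_coe.mp (closure_mono (preimage_mono h))
end

section
/- Let X be a compact Hausdorff space, let (P, f) be a projective cover of X, let F ⊆ X be a regular closed set (F = cl(int(F))), let V = int(F), and let Q = cl(f⁻¹(V)). Then f(Q) = F, Q is a clopen subset of P (hence Q with the subspace topology is an extremally disconnected compact Hausdorff space), and the restriction f|_Q : Q → F is an irreducible continuous surjection; that is, (Q, f|_Q) is a projective cover of F. -/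
open Set Topology

/-- A clopen subset of an extremally disconnected space is extremally disconnected. -/
lemma ed_of_clopen {P : Type*} [TopologicalSpace P] [ExtremallyDisconnected P]
    {Q : Set P} (hQ : IsClopen Q) : ExtremallyDisconnected Q := by
  constructor
  intro U hU
  have hemb : IsEmbedding (Subtype.val : Q → P) := IsEmbedding.subtypeVal
  rw [hemb.closure_eq_preimage_closure_image U]
  have hopen : IsOpen ((Subtype.val : Q → P) '' U) := hQ.2.isOpenEmbedding_subtypeVal.isOpenMap _ hU
  exact (ExtremallyDisconnected.open_closure _ hopen).preimage continuous_subtype_val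

/-- Let `(P, f)` be a projective cover of the compact Hausdorff space `X`, let `F ⊆ X`
be a regular closed set, `V = int F` and `Q = cl(f⁻¹ V)`.  Then `f(Q) = F`, `Q` is
clopen (so `Q` is an extremally disconnected compact Hausdorff space in the subspace
topology), and the restriction `f|_Q : Q → F` is an irreducible continuous surjection;
i.e. `(Q, f|_Q)` is a projective cover of `F`. -/
theorem stmt5 {X P : Type*} [TopologicalSpace X] [CompactSpace X] [T2Space X]
    [TopologicalSpace P] [CompactSpace P] [T2Space P] [ExtremallyDisconnected P]
    (f : P → X) (hcont : Continuous f) (hsurj : Function.Surjective f)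
    (hirr : ∀ F : Set P, IsClosed F → f '' F = Set.univ → F = Set.univ)
    (F : Set X) (hF : F = closure (interior F))
    (V : Set X) (hV : V = interior F)
    (Q : Set P) (hQ : Q = closure (f ⁻¹' V)) :
    f '' Q = F ∧ IsClopen Q ∧
    CompactSpace Q ∧ T2Space Q ∧ ExtremallyDisconnected Q ∧
    ∃ hm : Set.MapsTo f Q F,
      Continuous hm.restrict ∧ Function.Surjective hm.restrict ∧
      ∀ G : Set Q, IsClosed G → hm.restrict '' G = Set.univ → G = Set.univ := by
  have hQclosed : IsClosed Q := hQ ▸ isClosed_closure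
  have hVopen : IsOpen V := hV ▸ isOpen_interior
  have hQopen : IsOpen Q :=
    hQ ▸ ExtremallyDisconnected.open_closure _ (hVopen.preimage hcont)
  have hclopen : IsClopen Q := ⟨hQclosed, hQopen⟩
  -- f '' Q = F
  have himg : f '' Q = F := by
    apply Set.Subset.antisymm
    · rw [hQ, hF, ← hV]
      calc f '' closure (f ⁻¹' V) ⊆ closure (f '' (f ⁻¹' V)) :=
            image_closure_subset_closure_image hcont
        _ = closure V := by rw [Set.image_preimage_eq V hsurj]
    · have hclosedimg : IsClosed (f '' Q) :=
        (hQclosed.isCompact.image hcont).isClosed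
      have h1 : V ⊆ f '' Q := by
        rw [← Set.image_preimage_eq V hsurj]
        exact Set.image_mono (hQ ▸ subset_closure)
      rw [hF, ← hV]
      exact closure_minimal h1 hclosedimg
  have hm : Set.MapsTo f Q F := fun p hp => himg ▸ Set.mem_image_of_mem f hp
  refine ⟨himg, hclopen, isCompact_iff_compactSpace.mp hQclosed.isCompact, inferInstance,
    ed_of_clopen hclopen, hm, hcont.restrict hm, ?_, ?_⟩
  · rintro ⟨x, hx⟩
    obtain ⟨p, hp, hfp⟩ := himg ▸ hx
    exact ⟨⟨p, hp⟩, Subtype.ext hfp⟩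
  · intro G hG hGuniv
    have hG' : IsClosed ((Subtype.val : Q → P) '' G) :=
      (hQclosed.isClosedEmbedding_subtypeVal.isClosedMap) _ hG
    have hkey : f '' ((Subtype.val '' G) ∪ Qᶜ) = Set.univ := by
      apply Set.eq_univ_of_forall
      intro x
      by_cases hx : x ∈ F
      · have : (⟨x, hx⟩ : F) ∈ hm.restrict '' G := hGuniv ▸ Set.mem_univ _
        obtain ⟨g, hg, hfg⟩ := this
        exact ⟨g.1, Or.inl ⟨g, hg, rfl⟩, congrArg Subtype.val hfg⟩
      · obtain ⟨p, hp⟩ := hsurj x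
        refine ⟨p, Or.inr fun hpQ => hx (hp ▸ hm hpQ), hp⟩
    have huniv : (Subtype.val '' G) ∪ Qᶜ = Set.univ :=
      hirr _ (hG'.union hQopen.isClosed_compl) hkey
    apply Set.eq_univ_of_forall
    intro q
    have : q.1 ∈ (Subtype.val '' G) ∪ Qᶜ := huniv ▸ Set.mem_univ _
    rcases this with h | h
    · obtain ⟨g, hg, hgq⟩ := h
      exact (Subtype.ext hgq : g = q) ▸ hg
    · exact absurd q.2 h
end

section
/- Let X be a compact Hausdorff space and let (P, f) be a projective cover of X. Then f restricts to a bijection from the set of isolated points of P onto the set of isolated points of X: f is injective on isol(P) and f(isol(P)) = isol(X). -/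
open Set Topology

/-- Let `(P, f)` be a projective cover of the compact Hausdorff space `X`.  Then `f`
restricts to a bijection from the set of isolated points of `P` onto the set of isolated
points of `X`: it is injective on isolated points and maps them onto the isolated points
of `X`. -/
theorem stmt6 {X P : Type*} [TopologicalSpace X] [CompactSpace X] [T2Space X]
    [TopologicalSpace P] [CompactSpace P] [T2Space P] [ExtremallyDisconnected P]
    (f : P → X) (hcont : Continuous f) (hsurj : Function.Surjective f)
    (hirr : ∀ F : Set P, IsClosed F → f '' F = Set.univ → F = Set.univ) :
    Set.InjOn f {p : P | IsOpen ({p} : Set P)} ∧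
    f '' {p : P | IsOpen ({p} : Set P)} = {x : X | IsOpen ({x} : Set X)} := by
  have key : ∀ p : P, IsOpen ({p} : Set P) →
      f p ∉ f '' ({p}ᶜ) ∧ IsOpen ({f p} : Set X) := by
    intro p hp
    have hFc : IsClosed ({p}ᶜ : Set P) := hp.isClosed_compl
    have himg : IsClosed (f '' ({p}ᶜ)) := (hFc.isCompact.image hcont).isClosed
    have hnotmem : f p ∉ f '' ({p}ᶜ) := by
      intro hmem
      -- then f '' {p}ᶜ = univ, contradiction with irreducibility
      have huniv : f '' ({p}ᶜ) = univ := by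
        apply eq_univ_of_forall
        intro x
        obtain ⟨q, hq⟩ := hsurj x
        by_cases hqp : q = p
        · subst hqp; rw [← hq]; exact hmem
        · exact ⟨q, hqp, hq⟩
      have := hirr _ hFc huniv
      have : p ∈ ({p}ᶜ : Set P) := this ▸ mem_univ p
      exact this rfl
    refine ⟨hnotmem, ?_⟩
    have heq : f '' ({p}ᶜ) = ({f p}ᶜ : Set X) := by
      ext y
      constructor
      · rintro ⟨q, hq, rfl⟩ hy
        exact hnotmem (hy ▸ ⟨q, hq, rfl⟩)
      · intro hy
        obtain ⟨q, hq⟩ := hsurj y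
        refine ⟨q, ?_, hq⟩
        intro hqp
        exact hy (by rw [← hq, Set.mem_singleton_iff.mp hqp]; rfl)
    have : IsClosed ({f p}ᶜ : Set X) := heq ▸ himg
    simpa using this.isOpen_compl
  constructor
  · intro p hp q hq hfq
    by_contra hne
    exact (key p hp).1 ⟨q, fun h => hne (Set.mem_singleton_iff.mp h).symm, hfq.symm⟩
  · ext x
    constructor
    · rintro ⟨p, hp, rfl⟩
      exact (key p hp).2
    · intro hx
      -- x isolated in X; show some isolated p maps to x
      obtain ⟨p, hp⟩ := hsurj x
      have hU : IsOpen (f ⁻¹' {x}) := hx.preimage hcont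
      have hFc : IsClosed ((f ⁻¹' {x})ᶜ ∪ {p}) :=
        hU.isClosed_compl.union isClosed_singleton
    -- image is univ
      have huniv : f '' ((f ⁻¹' {x})ᶜ ∪ {p}) = univ := by
        apply eq_univ_of_forall
        intro y
        by_cases hyx : y = x
        · exact ⟨p, Or.inr rfl, by rw [hp, hyx]⟩
        · obtain ⟨q, hq⟩ := hsurj y
          exact ⟨q, Or.inl (fun h => hyx (by rw [← hq]; exact h)), hq⟩
      have hall := hirr _ hFc huniv
      have hsing : f ⁻¹' {x} = {p} := by
        apply Subset.antisymm
        · intro u hu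
          have : u ∈ (f ⁻¹' {x})ᶜ ∪ {p} := hall ▸ mem_univ u
          rcases this with h | h
          · exact absurd hu h
          · exact h
        · intro u hu
          simp only [mem_singleton_iff] at hu
          subst hu
          exact hp
      refine ⟨p, ?_, hp⟩
      show IsOpen ({p} : Set P)
      rw [← hsing]
      exact hU
end

section
/- Let X be a compact Hausdorff space, and set X_a = cl(isol(X)) and X_c = cl(X ∖ X_a), each with the subspace topology. For W_a ∈ Ropen(X_a) and W_c ∈ Ropen(X_c), regarded as subsets of X, define Θ(W_a, W_c) = int_X(cl_X(W_a ∪ W_c)) (interior and closure taken in X). Then Θ is a Boolean algebra isomorphism from the product Boolean algebra Ropen(X_a) × Ropen(X_c) onto Ropen(X). -/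
open Set Topology

section Aux

variable {X : Type*} [TopologicalSpace X]

lemma icic (S : Set X) :
    interior (closure (interior (closure S))) = interior (closure S) := by
  apply subset_antisymm
  · exact interior_mono (by
      simpa using closure_mono (interior_subset : interior (closure S) ⊆ closure S))
  · exact interior_maximal subset_closure isOpen_interior

lemma ro_open {U : Set X} (hU : U = interior (closure U)) : IsOpen U := by
  rw [hU]; exact isOpen_interior

lemma ro_inter {U V : Set X} (hU : U = interior (closure U)) (hV : V = interior (closure V)) :
    U ∩ V = interior (closure (U ∩ V)) := by
  refine subset_antisymm (interior_maximal subset_closure ((ro_open hU).inter (ro_open hV)))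
    (subset_inter ?_ ?_)
  · calc interior (closure (U ∩ V)) ⊆ interior (closure U) :=
          interior_mono (closure_mono inter_subset_left)
      _ = U := hU.symm
  · calc interior (closure (U ∩ V)) ⊆ interior (closure V) :=
          interior_mono (closure_mono inter_subset_right)
      _ = V := hV.symm

lemma closure_coe {S : Set X} (s : Set S) :
    closure s = Subtype.val ⁻¹' (closure (Subtype.val '' s)) := by
  ext x; exact closure_subtype

lemma fwd {S : Set X} (hS : closure (interior S) = S) {s : Set S}
    (hs : s = interior (closure s)) :
    closure (interior (closure (Subtype.val '' s))) = closure (Subtype.val '' s) ∧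
    interior (closure (Subtype.val '' s)) ⊆ interior S ∧
    s = interior (closure (Subtype.val ⁻¹' (interior (closure (Subtype.val '' s))))) := by
  set W : Set X := Subtype.val '' s with hW
  have hsopen : IsOpen s := ro_open hs
  obtain ⟨O, hO, hOs⟩ := isOpen_induced_iff.mp hsopen
  have hWOS : W = S ∩ O := by rw [hW, ← hOs, Subtype.image_preimage_coe]
  have hWS : W ⊆ S := Subtype.coe_image_subset S s
  have hWA : W ∩ interior S = O ∩ interior S := by
    rw [hWOS]; ext x; constructor
    · rintro ⟨⟨-, h2⟩, h3⟩; exact ⟨h2, h3⟩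
    · rintro ⟨h1, h2⟩; exact ⟨⟨interior_subset h2, h1⟩, h2⟩
  have hWAopen : IsOpen (W ∩ interior S) := hWA ▸ hO.inter isOpen_interior
  have hWcl : W ⊆ closure (W ∩ interior S) := by
    intro x hx
    have hx' : x ∈ O ∩ closure (interior S) := by
      rw [hS]; exact ⟨(hWOS ▸ hx).2, (hWOS ▸ hx).1⟩
    have := hO.inter_closure hx'
    rwa [← hWA] at this
  have hWAsub : W ∩ interior S ⊆ interior (closure W) :=
    interior_maximal ((inter_subset_left).trans subset_closure) hWAopen
  have hclW : closure (interior (closure W)) = closure W := by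
    apply subset_antisymm
    · simpa using closure_mono (interior_subset : interior (closure W) ⊆ closure W)
    · calc closure W ⊆ closure (closure (W ∩ interior S)) := closure_mono hWcl
        _ = closure (W ∩ interior S) := closure_closure
        _ ⊆ closure (interior (closure W)) := closure_mono hWAsub
  have hSclosed : IsClosed S := hS ▸ isClosed_closure
  have hPsub : interior (closure W) ⊆ interior S :=
    interior_mono (closure_minimal hWS hSclosed)
  refine ⟨hclW, hPsub, ?_⟩
  have hPS : S ∩ interior (closure W) = interior (closure W) :=
    inter_eq_self_of_subset_right (hPsub.trans interior_subset)
  calc s = interior (closure s) := hs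
    _ = interior (Subtype.val ⁻¹' (closure W)) := by rw [closure_coe, ← hW]
    _ = interior (closure (Subtype.val ⁻¹' (interior (closure W)) : Set S)) := by
        rw [closure_coe (Subtype.val ⁻¹' (interior (closure W)) : Set S),
          Subtype.image_preimage_coe, hPS, hclW]

lemma bwd {S : Set X} (_hS : closure (interior S) = S) {U : Set X}
    (hU : U = interior (closure U)) (hUS : U ⊆ interior S) :
    closure (Subtype.val ''
      (interior (closure (Subtype.val ⁻¹' U : Set S)) : Set S)) = closure U := by
  set t : Set S := Subtype.val ⁻¹' U with ht
  have hUS' : U ⊆ S := hUS.trans interior_subset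
  have himt : Subtype.val '' t = U := by
    rw [ht, Subtype.image_preimage_coe, inter_eq_self_of_subset_right hUS']
  have htopen : IsOpen t := (ro_open hU).preimage continuous_subtype_val
  have hts : t ⊆ interior (closure t) := interior_maximal subset_closure htopen
  have h1 : U ⊆ Subtype.val '' (interior (closure t) : Set S) := by
    rw [← himt]; exact image_mono hts
  have h2 : Subtype.val '' (interior (closure t) : Set S) ⊆ closure U := by
    intro x hx
    obtain ⟨y, hy, rfl⟩ := hx
    have : y ∈ closure t := interior_subset hy
    rw [closure_coe, himt] at this
    exact this
  apply subset_antisymm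
  · simpa using closure_mono h2
  · exact closure_mono h1

lemma proj {C P Q : Set X} (hC : IsOpen C) (hP : P = interior (closure P)) (hPC : P ⊆ C)
    (hQC : Q ∩ C = ∅) :
    interior (closure (P ∪ Q)) ∩ C = P := by
  have hclu : closure (P ∪ Q) = closure P ∪ closure Q := closure_union
  apply subset_antisymm
  · set O : Set X := interior (closure (P ∪ Q)) ∩ C with hO
    have hOopen : IsOpen O := isOpen_interior.inter hC
    have hOQ : O ∩ closure Q ⊆ closure (O ∩ Q) := hOopen.inter_closure
    have hOQ' : O ∩ Q = ∅ := by
      rw [hO]; ext x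
      simp only [mem_inter_iff, mem_empty_iff_false, iff_false]
      rintro ⟨⟨-, h2⟩, h3⟩
      have hxx : x ∈ Q ∩ C := ⟨h3, h2⟩
      rw [hQC] at hxx
      exact hxx
    have hOP : O ⊆ closure P := by
      intro x hx
      have hx1 : x ∈ closure P ∪ closure Q := by rw [← hclu]; exact interior_subset hx.1
      rcases hx1 with h | h
      · exact h
      · have := hOQ ⟨hx, h⟩
        rw [hOQ', closure_empty] at this
        exact this.elim
    calc O ⊆ interior (closure P) := interior_maximal hOP hOopen
      _ = P := hP.symm
  · refine subset_inter ?_ hPC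
    exact interior_maximal (subset_closure.trans (closure_mono subset_union_left))
      (ro_open hP)

end Aux

/-- Let `X` be compact Hausdorff, `X_a = cl(isol X)`, `X_c = cl(X ∖ X_a)` (with the
subspace topologies).  The map `(W_a, W_c) ↦ int_X(cl_X(W_a ∪ W_c))` (where regular open
subsets of the subspaces are regarded as subsets of `X`) is a Boolean algebra (order)
isomorphism from the product `Ropen(X_a) × Ropen(X_c)` onto `Ropen(X)`. -/
theorem stmt7 {X : Type*} [TopologicalSpace X] [CompactSpace X] [T2Space X]
    (Xa Xc : Set X) (hXa : Xa = closure {x : X | IsOpen ({x} : Set X)})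
    (hXc : Xc = closure (Set.univ \ Xa)) :
    (∀ Wa : Ropen Xa, ∀ Wc : Ropen Xc,
      interior (closure ((Subtype.val '' (Wa : Set Xa)) ∪ (Subtype.val '' (Wc : Set Xc))))
        = interior (closure (interior (closure
            ((Subtype.val '' (Wa : Set Xa)) ∪ (Subtype.val '' (Wc : Set Xc)))))) ) ∧
    ∃ Θ : Ropen Xa × Ropen Xc ≃o Ropen X,
      ∀ W : Ropen Xa × Ropen Xc,
        (Θ W : Set X) = interior (closure
          ((Subtype.val '' (W.1 : Set Xa)) ∪ (Subtype.val '' (W.2 : Set Xc)))) := by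
  refine ⟨fun Wa Wc => (icic _).symm, ?_⟩
  -- basic structure of Xa and Xc
  have hGopen : IsOpen {x : X | IsOpen ({x} : Set X)} := by
    refine isOpen_iff_forall_mem_open.mpr fun x hx => ⟨{x}, ?_, hx, rfl⟩
    rintro y rfl
    exact hx
  have hXaA : closure (interior Xa) = Xa := by
    have h1 : {x : X | IsOpen ({x} : Set X)} ⊆ interior Xa :=
      interior_maximal (hXa ▸ subset_closure) hGopen
    apply subset_antisymm
    · exact closure_minimal interior_subset (by rw [hXa]; exact isClosed_closure)
    · calc Xa = closure {x : X | IsOpen ({x} : Set X)} := hXa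
        _ ⊆ closure (interior Xa) := closure_mono h1
  set A : Set X := interior Xa with hA
  have hclA : closure A = Xa := hXaA
  have hAro : A = interior (closure A) := by rw [hclA]
  have hAopen : IsOpen A := isOpen_interior
  have hXcA : Xc = Aᶜ := by
    rw [hXc, ← Set.compl_eq_univ_diff, closure_compl, hA]
  have hXcB : closure (interior Xc) = Xc := by
    rw [hXcA]
    apply subset_antisymm
    · exact closure_minimal interior_subset hAopen.isClosed_compl
    · have h2 : (closure A)ᶜ ⊆ interior Aᶜ :=
        interior_maximal (compl_subset_compl.mpr subset_closure)
          isClosed_closure.isOpen_compl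
      calc Aᶜ = (interior (closure A))ᶜ := by rw [← hAro]
        _ = closure (closure A)ᶜ := closure_compl.symm
        _ ⊆ closure (interior Aᶜ) := closure_mono h2
  set B : Set X := interior Xc with hB
  have hBAc : B = interior Aᶜ := by rw [hB, hXcA]
  have hBro : B = interior (closure B) := by rw [hXcB]
  have hBsub : B ⊆ Aᶜ := hBAc ▸ interior_subset
  have hBopen : IsOpen B := isOpen_interior
  have hABdense : closure (A ∪ B) = univ := by
    apply eq_univ_of_univ_subset
    rw [closure_union, hclA]
    rintro x -
    by_cases hx : x ∈ A
    · exact Or.inl (by rw [← hclA]; exact subset_closure hx)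
    · right
      have : Aᶜ ⊆ closure B := by
        calc Aᶜ = (interior (closure A))ᶜ := by rw [← hAro]
          _ = closure (closure A)ᶜ := closure_compl.symm
          _ ⊆ closure B := closure_mono (hBAc ▸ interior_maximal
              (compl_subset_compl.mpr subset_closure) isClosed_closure.isOpen_compl)
      exact this hx
  -- the maps
  let f : Ropen Xa × Ropen Xc → Ropen X := fun W =>
    ⟨interior (closure ((Subtype.val '' (W.1 : Set Xa)) ∪ (Subtype.val '' (W.2 : Set Xc)))),
      (icic _).symm⟩
  let g : Ropen X → Ropen Xa × Ropen Xc := fun V =>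
    (⟨interior (closure (Subtype.val ⁻¹' ((V : Set X) ∩ A) : Set Xa)), (icic _).symm⟩,
     ⟨interior (closure (Subtype.val ⁻¹' ((V : Set X) ∩ B) : Set Xc)), (icic _).symm⟩)
  have hsplit : ∀ V : Set X, V = interior (closure V) →
      interior (closure ((V ∩ A) ∪ (V ∩ B))) = V := by
    intro V hV
    rw [← inter_union_distrib_left]
    have h1 : closure (V ∩ (A ∪ B)) = closure V := by
      apply subset_antisymm (closure_mono inter_subset_left)
      have : V ⊆ closure (V ∩ (A ∪ B)) := by
        intro x hx
        exact (ro_open hV).inter_closure ⟨hx, by rw [hABdense]; trivial⟩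
      calc closure V ⊆ closure (closure (V ∩ (A ∪ B))) := closure_mono this
        _ = closure (V ∩ (A ∪ B)) := closure_closure
    rw [h1, ← hV]
  have left_inv : ∀ W : Ropen Xa × Ropen Xc, g (f W) = W := by
    rintro ⟨Wa, Wc⟩
    obtain ⟨hcl₁, hsub₁, hrec₁⟩ := fwd hXaA Wa.2
    obtain ⟨hcl₂, hsub₂, hrec₂⟩ := fwd hXcB Wc.2
    set W₁ : Set X := Subtype.val '' (Wa : Set Xa)
    set W₂ : Set X := Subtype.val '' (Wc : Set Xc)
    set P : Set X := interior (closure W₁)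
    set Q : Set X := interior (closure W₂)
    have hPro : P = interior (closure P) := (icic _).symm
    have hQro : Q = interior (closure Q) := (icic _).symm
    have hfval : (f (Wa, Wc) : Set X) = interior (closure (P ∪ Q)) := by
      show interior (closure (W₁ ∪ W₂)) = _
      rw [closure_union, closure_union, hcl₁, hcl₂]
    have hQA : Q ∩ A = ∅ := by
      have : Q ⊆ Aᶜ := (hsub₂.trans hBsub)
      ext x
      simp only [mem_inter_iff, mem_empty_iff_false, iff_false]
      rintro ⟨h1, h2⟩
      exact this h1 h2
    have hPB : P ∩ B = ∅ := by
      have : P ⊆ A := hsub₁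
      ext x
      simp only [mem_inter_iff, mem_empty_iff_false, iff_false]
      rintro ⟨h1, h2⟩
      exact hBsub h2 (this h1)
    have hprojA : (f (Wa, Wc) : Set X) ∩ A = P := by
      rw [hfval]; exact proj hAopen hPro hsub₁ hQA
    have hprojB : (f (Wa, Wc) : Set X) ∩ B = Q := by
      rw [hfval, union_comm]; exact proj hBopen hQro hsub₂ hPB
    refine Prod.ext (Subtype.ext ?_) (Subtype.ext ?_)
    · show interior (closure (Subtype.val ⁻¹' ((f (Wa, Wc) : Set X) ∩ A) : Set Xa)) = (Wa : Set Xa)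
      rw [hprojA, ← hrec₁]
    · show interior (closure (Subtype.val ⁻¹' ((f (Wa, Wc) : Set X) ∩ B) : Set Xc)) = (Wc : Set Xc)
      rw [hprojB, ← hrec₂]
  have right_inv : ∀ V : Ropen X, f (g V) = V := by
    intro V
    have hUA : (V : Set X) ∩ A = interior (closure ((V : Set X) ∩ A)) := ro_inter V.2 hAro
    have hUB : (V : Set X) ∩ B = interior (closure ((V : Set X) ∩ B)) := ro_inter V.2 hBro
    have hUAsub : (V : Set X) ∩ A ⊆ interior Xa := by rw [← hA]; exact inter_subset_right
    have hUBsub : (V : Set X) ∩ B ⊆ interior Xc := by rw [← hB]; exact inter_subset_right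
    have h1 := bwd hXaA hUA hUAsub
    have h2 := bwd hXcB hUB hUBsub
    apply Subtype.ext
    show interior (closure (Subtype.val ''
        (interior (closure (Subtype.val ⁻¹' ((V : Set X) ∩ A) : Set Xa)) : Set Xa)
      ∪ Subtype.val ''
        (interior (closure (Subtype.val ⁻¹' ((V : Set X) ∩ B) : Set Xc)) : Set Xc)))
      = (V : Set X)
    rw [closure_union, h1, h2, ← closure_union]
    exact hsplit _ V.2
  have hfm : Monotone f := by
    rintro W W' h
    show (f W : Set X) ⊆ (f W' : Set X)
    exact interior_mono (closure_mono
      (union_subset_union (image_mono h.1) (image_mono h.2)))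
  have hgm : Monotone g := by
    rintro V V' h
    constructor
    · show (g V).1.val ⊆ (g V').1.val
      exact interior_mono (closure_mono (preimage_mono (inter_subset_inter_left _ h)))
    · show (g V).2.val ⊆ (g V').2.val
      exact interior_mono (closure_mono (preimage_mono (inter_subset_inter_left _ h)))
  refine ⟨(Equiv.mk f g left_inv right_inv).toOrderIso hfm hgm, fun W => rfl⟩
end

section
/- Let X be a compact Hausdorff space, and set X_a = cl(isol(X)) and X_c = cl(X ∖ X_a), each with the subspace topology. Then the Boolean algebra Ropen(X_a) is atomic (every nonzero element lies above an atom) and the Boolean algebra Ropen(X_c) is atomless (it has no atoms). -/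
open Set Topology

/-- An atom of `Ropen(Z)`: a nonempty regular open set all of whose proper regular open
subsets are empty.  (`∅` is the bottom element of `Ropen(Z)`.) -/
def RopenAtom {Z : Type*} [TopologicalSpace Z] (a : Ropen Z) : Prop :=
  (a : Set Z) ≠ ∅ ∧ ∀ b : Ropen Z, (b : Set Z) ⊂ (a : Set Z) → (b : Set Z) = ∅

theorem myreg {Z : Type*} [TopologicalSpace Z] (S : Set Z) :
    interior (closure (interior (closure S))) = interior (closure S) := by
  apply subset_antisymm
  · apply interior_mono
    calc closure (interior (closure S)) ⊆ closure (closure S) := closure_mono interior_subset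
    _ = closure S := closure_closure
  · exact interior_maximal (subset_closure) isOpen_interior

/-- Let `X` be compact Hausdorff, `X_a = cl(isol X)` and `X_c = cl(X ∖ X_a)` with the
subspace topologies.  Then the Boolean algebra `Ropen(X_a)` is atomic (every nonzero
element lies above an atom) and `Ropen(X_c)` is atomless. -/
theorem stmt8 {X : Type*} [TopologicalSpace X] [CompactSpace X] [T2Space X]
    (Xa Xc : Set X) (hXa : Xa = closure {x : X | IsOpen ({x} : Set X)})
    (hXc : Xc = closure (Set.univ \ Xa)) :
    (∀ U : Ropen Xa, (U : Set Xa) ≠ ∅ →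
      ∃ a : Ropen Xa, RopenAtom a ∧ (a : Set Xa) ⊆ (U : Set Xa)) ∧
    (∀ a : Ropen Xc, ¬ RopenAtom a) := by
  constructor
  · -- atomic part
    rintro ⟨U, hUreg⟩ hUne
    have hUopen : IsOpen U := by rw [hUreg]; exact isOpen_interior
    -- U = val ⁻¹' W for some open W in X
    obtain ⟨W, hWopen, hWU⟩ := isOpen_induced_iff.mp hUopen
    obtain ⟨z, hz⟩ := Set.nonempty_iff_ne_empty.mpr hUne
    have hz' : z ∈ U := hz
    have hzW : (z : X) ∈ W := by rw [← hWU] at hz'; exact hz'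
    have hzXa : (z : X) ∈ closure {x : X | IsOpen ({x} : Set X)} := hXa ▸ z.2
    obtain ⟨x, hxW, hxIso⟩ := (mem_closure_iff.mp hzXa) W hWopen hzW
    have hxXa : x ∈ Xa := hXa ▸ subset_closure hxIso
    -- the singleton {⟨x⟩} in Xa
    set p : Xa := ⟨x, hxXa⟩ with hp
    have hsing_open : IsOpen ({p} : Set Xa) := by
      have : ({p} : Set Xa) = Subtype.val ⁻¹' {x} := by
        ext y; simp [hp, Subtype.ext_iff]
      rw [this]
      exact hxIso.preimage continuous_subtype_val
    have hsing_reg : ({p} : Set Xa) = interior (closure ({p} : Set Xa)) := by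
      rw [closure_singleton, hsing_open.interior_eq]
    refine ⟨⟨{p}, hsing_reg⟩, ⟨?_, ?_⟩, ?_⟩
    · exact Set.singleton_ne_empty p
    · rintro ⟨b, hbreg⟩ hb
      rcases Set.subset_singleton_iff_eq.mp hb.subset with h | h
      · exact h
      · exact absurd h hb.ne
    · intro y hy
      simp only [Set.mem_singleton_iff] at hy
      subst hy
      show p ∈ U
      rw [← hWU]
      exact hxW
  · -- atomless part
    have hXaClosed : IsClosed Xa := hXa ▸ isClosed_closure
    -- no isolated points in Xc
    have hNoIso : ∀ z : Xc, ¬ IsOpen ({z} : Set Xc) := by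
      rintro z hz
      obtain ⟨W, hWopen, hWz⟩ := isOpen_induced_iff.mp hz
      have hzW : (z : X) ∈ W := by
        have : z ∈ Subtype.val ⁻¹' W := hWz ▸ rfl
        exact this
      have hzXc : (z : X) ∈ closure (Set.univ \ Xa) := hXc ▸ z.2
      have hsub : Set.univ \ Xa ⊆ Xc := hXc ▸ subset_closure
      have key : ∀ w, w ∈ W ∩ (Set.univ \ Xa) → w = (z : X) := by
        rintro w ⟨hwW, hwD⟩
        have hwXc : w ∈ Xc := hsub hwD
        have : (⟨w, hwXc⟩ : Xc) ∈ Subtype.val ⁻¹' W := hwW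
        rw [hWz] at this
        exact congrArg Subtype.val this
      obtain ⟨w, hw⟩ := (mem_closure_iff.mp hzXc) W hWopen hzW
      have hwz := key w hw
      rw [hwz] at hw
      have hset : W ∩ (Set.univ \ Xa) = {(z : X)} := by
        apply subset_antisymm
        · intro u hu; exact key u hu
        · rintro u hu; rw [Set.mem_singleton_iff] at hu; subst hu; exact hw
      have hDopen : IsOpen (Set.univ \ Xa) := by
        rw [← Set.compl_eq_univ_diff]
        exact hXaClosed.isOpen_compl
      have hopen : IsOpen ({(z : X)} : Set X) := hset ▸ hWopen.inter hDopen
      have : (z : X) ∈ Xa := hXa ▸ subset_closure hopen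
      exact hw.2.2 this
    rintro ⟨a, hareg⟩ ⟨hne, hatom⟩
    have haopen : IsOpen a := by rw [hareg]; exact isOpen_interior
    obtain ⟨x, hx⟩ := Set.nonempty_iff_ne_empty.mpr hne
    -- a has a second point
    have : ∃ y ∈ a, y ≠ x := by
      by_contra hcon
      push_neg at hcon
      have : a = {x} := subset_antisymm (fun y hy => hcon y hy) (by rintro y rfl; exact hx)
      exact hNoIso x (this ▸ haopen)
    obtain ⟨y, hy, hyx⟩ := this
    obtain ⟨U, V, hUopen, hVopen, hxU, hyV, hUV⟩ := t2_separation (Ne.symm hyx)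
    set b : Set Xc := interior (closure (a ∩ U)) with hb
    have hbreg : b = interior (closure b) := (myreg (a ∩ U)).symm
    have hbsub : b ⊆ a := by
      calc b ⊆ interior (closure a) := interior_mono (closure_mono Set.inter_subset_left)
      _ = a := hareg.symm
    have hxb : x ∈ b := interior_maximal subset_closure (haopen.inter hUopen) ⟨hx, hxU⟩
    have hyb : y ∉ b := by
      intro hyb
      have h1 : y ∈ closure U := closure_mono Set.inter_subset_right (interior_subset hyb)
      exact (hUV.closure_left hVopen).le_bot ⟨h1, hyV⟩
    have hss : b ⊂ a := ⟨hbsub, fun h => hyb (h hy)⟩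
    have hb0 : b = ∅ := hatom ⟨b, hbreg⟩ hss
    rw [hb0] at hxb
    exact absurd hxb (Set.notMem_empty x)
end

section
/- Let X be a compact Hausdorff space, and set X_a = cl(isol(X)) and X_c = cl(X ∖ X_a). Then X_c is a perfect subset of X: X_c is closed and every point of X_c is an accumulation point of X_c (equivalently, the subspace X_c has no isolated points). -/
open Set Topology

/-- Let `X` be compact Hausdorff, `X_a = cl(isol X)` and `X_c = cl(X ∖ X_a)`.  Then
`X_c` is a perfect subset of `X`: it is closed and every point of it is an accumulation
point of it (equivalently, the subspace `X_c` has no isolated points). -/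
theorem stmt9 {X : Type*} [TopologicalSpace X] [CompactSpace X] [T2Space X]
    (Xa Xc : Set X) (hXa : Xa = closure {x : X | IsOpen ({x} : Set X)})
    (hXc : Xc = closure (Set.univ \ Xa)) :
    Perfect Xc := by
  subst hXa hXc
  apply Preperfect.perfect_closure
  intro x hx
  rw [accPt_iff_nhds]
  intro W hW
  set V := (closure {x : X | IsOpen ({x} : Set X)})ᶜ with hVdef
  have hVopen : IsOpen V := isClosed_closure.isOpen_compl
  have hxV : x ∈ V := hx.2
  obtain ⟨O, hOW, hOopen, hxO⟩ := mem_nhds_iff.mp (Filter.inter_mem hW (hVopen.mem_nhds hxV))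
  -- O is an open set containing x inside W ∩ V
  have hnot : O ≠ {x} := by
    intro h
    have : IsOpen ({x} : Set X) := h ▸ hOopen
    exact hxV (subset_closure this)
  obtain ⟨y, hyO, hyx⟩ : ∃ y ∈ O, y ≠ x := by
    by_contra hcon
    push_neg at hcon
    apply hnot
    apply Set.eq_singleton_iff_unique_mem.mpr ⟨hxO, fun z hz => hcon z hz⟩
  have hyV : y ∈ V := (hOW hyO).2
  exact ⟨y, ⟨(hOW hyO).1, ⟨trivial, hyV⟩⟩, hyx⟩
end

section
/- Let X be a compact Hausdorff space and let J be a closed ideal of C(X) (closed in the uniform norm topology). Then J is a regular ideal, i.e. J = J^⊥⊥, if and only if supp(J) = {x ∈ X : f(x) ≠ 0 for some f ∈ J} is a regular open subset of X (i.e., supp(J) = int(cl(supp(J)))). -/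
open Set Topology

/-- The annihilator `S^⊥ = {f : f·g = 0 for all g ∈ S}` of a subset of a commutative
ring, as an ideal. -/
noncomputable def setAnn {A : Type*} [CommRing A] (S : Set A) : Ideal A where
  carrier := {f | ∀ g ∈ S, f * g = 0}
  add_mem' := by
    intro a b ha hb g hg
    rw [add_mul, ha g hg, hb g hg, add_zero]
  zero_mem' := by intro g hg; rw [zero_mul]
  smul_mem' := by
    intro c x hx g hg
    rw [smul_eq_mul, mul_assoc, hx g hg, mul_zero]

/-- An ideal is regular if it equals its double annihilator. -/
def IsRegularIdeal {A : Type*} [CommRing A] (J : Ideal A) : Prop :=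
  setAnn (setAnn (J : Set A) : Set A) = J

/-- The open support `supp(J) = {x : f x ≠ 0 for some f ∈ J}` of an ideal of `C(X, ℂ)`. -/
def suppIdeal {X : Type*} [TopologicalSpace X] (J : Ideal C(X, ℂ)) : Set X :=
  {x | ∃ f ∈ J, f x ≠ 0}

/-- The ideal `ideal(G)` of continuous functions vanishing off the set `G`. -/
noncomputable def idealOf {X : Type*} [TopologicalSpace X] (G : Set X) : Ideal C(X, ℂ) where
  carrier := {f | ∀ x ∉ G, f x = 0}
  add_mem' := by
    intro a b ha hb x hx
    simp [ha x hx, hb x hx]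
  zero_mem' := by intro x hx; simp
  smul_mem' := by
    intro c f hf x hx
    simp [hf x hx]

/-- The annihilator of any subset of `C(X, ℂ)` is the ideal of functions vanishing off
the complement of the closure of the set's support. -/
lemma setAnn_eq {X : Type*} [TopologicalSpace X] (S : Set C(X, ℂ)) :
    setAnn S = ContinuousMap.idealOfSet ℂ ((closure {x | ∃ g ∈ S, g x ≠ 0})ᶜ) := by
  ext f
  rw [ContinuousMap.mem_idealOfSet]
  constructor
  · intro hf x hx
    rw [compl_compl] at hx
    refine closure_minimal ?_ (isClosed_singleton.preimage f.continuous) hx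
    rintro y ⟨g, hg, hgy⟩
    have h0 : f y * g y = 0 := by
      have := hf g hg
      calc f y * g y = (f * g) y := rfl
        _ = 0 := by rw [this]; rfl
    exact (mul_eq_zero.mp h0).resolve_right hgy
  · intro hf g hg
    ext x
    show f x * g x = 0
    by_cases hgx : g x = 0
    · rw [hgx, mul_zero]
    · have hx : x ∈ closure {x | ∃ g ∈ S, g x ≠ 0} := subset_closure ⟨g, hg, hgx⟩
      rw [hf (by simpa using hx), zero_mul]

/-- A closed ideal `J` of `C(X, ℂ)` (`X` compact Hausdorff) is regular, i.e.
`J = J^⊥⊥`, if and only if its open support is a regular open subset of `X`. -/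
theorem stmt11 {X : Type*} [TopologicalSpace X] [CompactSpace X] [T2Space X]
    (J : Ideal C(X, ℂ)) (hJ : IsClosed (J : Set C(X, ℂ))) :
    IsRegularIdeal J ↔ suppIdeal J = interior (closure (suppIdeal J)) := by
  set U := suppIdeal J with hUdef
  have hU : U = ContinuousMap.setOfIdeal J := by
    ext x; rw [ContinuousMap.mem_setOfIdeal]; rfl
  have hJ' : ContinuousMap.idealOfSet ℂ U = J := by
    rw [hU]; exact ContinuousMap.idealOfSet_ofIdeal_isClosed hJ
  have h1 : setAnn (J : Set C(X, ℂ)) =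
      ContinuousMap.idealOfSet ℂ ((closure U)ᶜ) := by
    rw [setAnn_eq]
    congr 2
  have h2 : setAnn ((setAnn (J : Set C(X, ℂ)) : Ideal C(X, ℂ)) : Set C(X, ℂ)) =
      ContinuousMap.idealOfSet ℂ (interior (closure U)) := by
    rw [h1, setAnn_eq]
    have hs : {x | ∃ g ∈ (ContinuousMap.idealOfSet ℂ ((closure U)ᶜ) : Set C(X, ℂ)), g x ≠ 0}
        = ContinuousMap.setOfIdeal (ContinuousMap.idealOfSet ℂ ((closure U)ᶜ)) := by
      ext x; rw [ContinuousMap.mem_setOfIdeal]; rfl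
    rw [hs, ContinuousMap.setOfIdeal_ofSet_eq_interior, interior_compl,
      closure_closure, closure_compl, compl_compl]
  unfold IsRegularIdeal
  rw [h2]
  constructor
  · intro h
    have := congrArg ContinuousMap.setOfIdeal (h.trans hJ'.symm)
    rw [ContinuousMap.setOfIdeal_ofSet_eq_interior,
      ContinuousMap.setOfIdeal_ofSet_eq_interior, interior_interior] at this
    rw [this, hU]
    exact (ContinuousMap.setOfIdeal_open J).interior_eq.symm
  · intro h
    rw [← h, hJ']
end

section
/- Let X be a compact Hausdorff space. The map J ↦ supp(J) is a bijection from the set of regular ideals of C(X) onto Ropen(X), with inverse G ↦ ideal(G), and it preserves the Boolean operations: for regular ideals J, J₁, J₂ of C(X), supp(J^⊥) = int(X ∖ supp(J)), supp(J₁ ∩ J₂) = supp(J₁) ∩ supp(J₂), and supp((J₁ ∪ J₂)^⊥⊥) = int(cl(supp(J₁) ∪ supp(J₂))). -/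
open Set Topology

section Aux

variable {X : Type*} [TopologicalSpace X]

lemma mem_setAnn' {S : Set C(X, ℂ)} {f : C(X, ℂ)} :
    f ∈ setAnn S ↔ ∀ g ∈ S, f * g = 0 := Iff.rfl

lemma mem_idealOf' {G : Set X} {f : C(X, ℂ)} :
    f ∈ idealOf G ↔ ∀ x ∉ G, f x = 0 := Iff.rfl

/-- The union of cozero sets of a family of functions. -/
def cozSet (S : Set C(X, ℂ)) : Set X := {x | ∃ g ∈ S, g x ≠ 0}

lemma suppIdeal_eq_coz (J : Ideal C(X, ℂ)) :
    suppIdeal J = cozSet (J : Set C(X, ℂ)) := rfl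

lemma setAnn_eq_s12 (S : Set C(X, ℂ)) :
    setAnn S = idealOf ((closure (cozSet S))ᶜ) := by
  ext f
  rw [mem_setAnn', mem_idealOf']
  constructor
  · intro h x hx
    rw [notMem_compl_iff] at hx
    have hsub : cozSet S ⊆ f ⁻¹' {0} := by
      rintro y ⟨g, hg, hgy⟩
      have h2 := congrArg (fun h : C(X, ℂ) => h y) (h g hg)
      simp only [ContinuousMap.mul_apply, ContinuousMap.zero_apply] at h2
      exact (mul_eq_zero.mp h2).resolve_right hgy
    exact closure_minimal hsub (isClosed_singleton.preimage f.continuous) hx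
  · intro h g hg
    ext x
    simp only [ContinuousMap.mul_apply, ContinuousMap.zero_apply]
    by_cases hgx : g x = 0
    · simp [hgx]
    · have hx : x ∈ cozSet S := ⟨g, hg, hgx⟩
      have hfx : f x = 0 := h x (not_not_intro (subset_closure hx))
      simp [hfx]

lemma idealOf_interior (S : Set X) : idealOf (interior S) = idealOf S := by
  ext f
  rw [mem_idealOf', mem_idealOf']
  constructor
  · intro h x hx
    exact h x fun hx' => hx (interior_subset hx')
  · intro h x hx
    by_contra hfx
    have hopen : IsOpen {y | f y ≠ 0} := (isClosed_singleton.preimage f.continuous).isOpen_compl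
    have hsub : {y | f y ≠ 0} ⊆ S := fun y hy => by
      by_contra hyS; exact hy (h y hyS)
    exact hx (interior_maximal hsub hopen hfx)

lemma suppIdeal_idealOf_open {U : Set X} [CompactSpace X] [T2Space X] (hU : IsOpen U) :
    suppIdeal (idealOf U) = U := by
  ext x
  constructor
  · rintro ⟨f, hf, hfx⟩
    by_contra hx
    exact hfx (hf x hx)
  · intro hx
    obtain ⟨f, hf0, hf1, -⟩ := exists_continuous_zero_one_of_isClosed
      hU.isClosed_compl isClosed_singleton
      (Set.disjoint_left.mpr fun y hy (hy' : y ∈ ({x} : Set X)) => hy (hy' ▸ hx))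
    refine ⟨ContinuousMap.comp ⟨Complex.ofReal, Complex.continuous_ofReal⟩ f, ?_, ?_⟩
    · intro y hy
      simp [ContinuousMap.comp_apply, hf0 hy]
    · simp [ContinuousMap.comp_apply, hf1 rfl]

lemma suppIdeal_idealOf [CompactSpace X] [T2Space X] (S : Set X) :
    suppIdeal (idealOf S) = interior S := by
  rw [← idealOf_interior, suppIdeal_idealOf_open isOpen_interior]

lemma setAnn_setAnn (S : Set C(X, ℂ)) [CompactSpace X] [T2Space X] :
    setAnn (setAnn S : Set C(X, ℂ)) = idealOf (interior (closure (cozSet S))) := by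
  rw [setAnn_eq_s12 (setAnn S : Set C(X, ℂ))]
  have h1 : cozSet (setAnn S : Set C(X, ℂ)) = (closure (cozSet S))ᶜ := by
    rw [← suppIdeal_eq_coz, setAnn_eq_s12 S,
      suppIdeal_idealOf_open (isClosed_closure.isOpen_compl)]
  rw [h1, closure_compl, compl_compl]

lemma cozSet_union (S T : Set C(X, ℂ)) : cozSet (S ∪ T) = cozSet S ∪ cozSet T := by
  ext x
  simp only [cozSet, Set.mem_union, Set.mem_setOf_eq]
  constructor
  · rintro ⟨g, hg | hg, hx⟩
    · exact Or.inl ⟨g, hg, hx⟩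
    · exact Or.inr ⟨g, hg, hx⟩
  · rintro (⟨g, hg, hx⟩ | ⟨g, hg, hx⟩)
    · exact ⟨g, Or.inl hg, hx⟩
    · exact ⟨g, Or.inr hg, hx⟩

lemma regular_eq_idealOf [CompactSpace X] [T2Space X] {J : Ideal C(X, ℂ)}
    (hJ : IsRegularIdeal J) :
    J = idealOf (interior (closure (suppIdeal J))) := by
  conv_lhs => rw [← hJ]
  rw [setAnn_setAnn, suppIdeal_eq_coz]

end Aux

/-- For `X` compact Hausdorff, `J ↦ supp(J)` is a bijection from the regular ideals of
`C(X, ℂ)` onto the regular open subsets of `X`, with inverse `G ↦ ideal(G)`, and it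
preserves the Boolean operations. -/
theorem stmt12 {X : Type*} [TopologicalSpace X] [CompactSpace X] [T2Space X] :
    (∀ J : Ideal C(X, ℂ), IsRegularIdeal J →
      suppIdeal J = interior (closure (suppIdeal J)) ∧ idealOf (suppIdeal J) = J) ∧
    (∀ G : Set X, G = interior (closure G) →
      IsRegularIdeal (idealOf G) ∧ suppIdeal (idealOf G) = G) ∧
    (∀ J : Ideal C(X, ℂ), IsRegularIdeal J →
      suppIdeal (setAnn (J : Set C(X, ℂ))) = interior (Set.univ \ suppIdeal J)) ∧
    (∀ J₁ J₂ : Ideal C(X, ℂ), IsRegularIdeal J₁ → IsRegularIdeal J₂ →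
      suppIdeal (J₁ ⊓ J₂) = suppIdeal J₁ ∩ suppIdeal J₂) ∧
    (∀ J₁ J₂ : Ideal C(X, ℂ), IsRegularIdeal J₁ → IsRegularIdeal J₂ →
      suppIdeal (setAnn (setAnn ((J₁ : Set C(X, ℂ)) ∪ (J₂ : Set C(X, ℂ))) : Set C(X, ℂ)))
        = interior (closure (suppIdeal J₁ ∪ suppIdeal J₂))) := by
  refine ⟨?_, ?_, ?_, ?_, ?_⟩
  · intro J hJ
    have h1 : J = idealOf (interior (closure (suppIdeal J))) := regular_eq_idealOf hJ
    have h2 : suppIdeal J = interior (closure (suppIdeal J)) := by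
      conv_lhs => rw [h1]
      rw [suppIdeal_idealOf_open isOpen_interior]
    exact ⟨h2, by rw [h2, ← h1]⟩
  · intro G hG
    have hGopen : IsOpen G := hG ▸ isOpen_interior
    have hsupp : suppIdeal (idealOf G) = G := suppIdeal_idealOf_open hGopen
    refine ⟨?_, hsupp⟩
    rw [IsRegularIdeal, setAnn_setAnn, ← suppIdeal_eq_coz, hsupp, ← hG]
  · intro J hJ
    rw [setAnn_eq_s12, suppIdeal_idealOf_open isClosed_closure.isOpen_compl,
      ← suppIdeal_eq_coz, ← Set.compl_eq_univ_diff, interior_compl]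
  · intro J₁ J₂ _ _
    ext x
    constructor
    · rintro ⟨f, hf, hfx⟩
      exact ⟨⟨f, hf.1, hfx⟩, ⟨f, hf.2, hfx⟩⟩
    · rintro ⟨⟨f₁, h1, hx1⟩, ⟨f₂, h2, hx2⟩⟩
      refine ⟨f₁ * f₂, ⟨Ideal.mul_mem_right f₂ J₁ h1, Ideal.mul_mem_left J₂ f₁ h2⟩, ?_⟩
      simp only [ContinuousMap.mul_apply]
      exact mul_ne_zero hx1 hx2
  · intro J₁ J₂ _ _
    rw [setAnn_setAnn, suppIdeal_idealOf, interior_interior, cozSet_union,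
      ← suppIdeal_eq_coz, ← suppIdeal_eq_coz]
end

section
/- Let X and Y be compact Hausdorff spaces, let π : Y → X be a continuous surjection, and let α : C(X) → C(Y) be given by α(f) = f ∘ π. Then π is irreducible if and only if for every closed ideal K of C(Y) (closed in the uniform norm topology), α⁻¹(K) = {0} implies K = {0}. -/
open Set Topology

/-- For `α : C(X, ℂ) → C(Y, ℂ)`, `α(f) = f ∘ π`, the preimage ideal
`α⁻¹(K) = {f : f ∘ π ∈ K}` of an ideal `K` of `C(Y, ℂ)`. -/
noncomputable def alphaPre {X Y : Type*} [TopologicalSpace X] [TopologicalSpace Y]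
    (π : C(Y, X)) (K : Ideal C(Y, ℂ)) : Ideal C(X, ℂ) where
  carrier := {f | f.comp π ∈ K}
  add_mem' := by
    intro a b ha hb
    simp only [Set.mem_setOf_eq, ContinuousMap.add_comp] at *
    exact K.add_mem ha hb
  zero_mem' := by
    simp only [Set.mem_setOf_eq, ContinuousMap.zero_comp]
    exact K.zero_mem
  smul_mem' := by
    intro c f hf
    simp only [smul_eq_mul, Set.mem_setOf_eq, ContinuousMap.mul_comp] at *
    exact K.mul_mem_left _ hf

/-- For `α : C(X, ℂ) → C(Y, ℂ)`, `α(f) = f ∘ π`, the ideal `Υ(J) = α(J)^⊥⊥` of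
`C(Y, ℂ)` associated to an ideal `J` of `C(X, ℂ)`. -/
noncomputable def Upsilon {X Y : Type*} [TopologicalSpace X] [TopologicalSpace Y]
    (π : C(Y, X)) (J : Ideal C(X, ℂ)) : Ideal C(Y, ℂ) :=
  setAnn ((setAnn ((fun f : C(X, ℂ) => f.comp π) '' (J : Set C(X, ℂ))) : Ideal C(Y, ℂ)) :
    Set C(Y, ℂ))

/-- Let `π : Y → X` be a continuous surjection of compact Hausdorff spaces and
`α : C(X) → C(Y)`, `α(f) = f ∘ π`.  Then `π` is irreducible if and only if for every
closed ideal `K` of `C(Y, ℂ)`, `α⁻¹(K) = {0}` implies `K = {0}`. -/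
theorem stmt13 {X Y : Type*} [TopologicalSpace X] [CompactSpace X] [T2Space X]
    [TopologicalSpace Y] [CompactSpace Y] [T2Space Y]
    (π : Y → X) (hπc : Continuous π) (hπs : Function.Surjective π) :
    (∀ F : Set Y, IsClosed F → π '' F = Set.univ → F = Set.univ) ↔
    (∀ K : Ideal C(Y, ℂ), IsClosed (K : Set C(Y, ℂ)) →
      {f : C(X, ℂ) | f.comp ⟨π, hπc⟩ ∈ K} = {0} → (K : Set C(Y, ℂ)) = {0}) := by

  constructor
  · intro hirr K hK hpre
    ext g
    simp only [Set.mem_singleton_iff]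
    constructor
    · intro hg
      by_contra hgne
      -- g ∈ K, g ≠ 0
      obtain ⟨y, hy⟩ : ∃ y, g y ≠ 0 := by
        by_contra h
        push_neg at h
        exact hgne (ContinuousMap.ext h)
      set U := ContinuousMap.setOfIdeal K with hU
      have hyU : y ∈ U := ContinuousMap.mem_setOfIdeal.mpr ⟨g, hg, hy⟩
      have hUc : IsClosed Uᶜ := (ContinuousMap.setOfIdeal_open K).isClosed_compl
      have himc : IsClosed (π '' Uᶜ) := (hUc.isCompact.image hπc).isClosed
      have hne : π '' Uᶜ ≠ Set.univ := by
        intro h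
        have := hirr Uᶜ hUc h
        have : y ∈ Uᶜ := this ▸ Set.mem_univ y
        exact this hyU
      obtain ⟨x, hx⟩ : ∃ x, x ∉ π '' Uᶜ := by
        by_contra h
        push_neg at h
        exact hne (Set.eq_univ_of_forall h)
      obtain ⟨f, hf0, hf1, -⟩ := exists_continuous_zero_one_of_isClosed himc
        (isClosed_singleton (x := x)) (Set.disjoint_singleton_right.mpr hx)
      set fc : C(X, ℂ) :=
        (⟨Complex.ofReal, Complex.continuous_ofReal⟩ : C(ℝ, ℂ)).comp f with hfc
      have hfcK : fc.comp ⟨π, hπc⟩ ∈ K := by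
        rw [← ContinuousMap.idealOfSet_ofIdeal_isClosed hK]
        rw [ContinuousMap.mem_idealOfSet]
        intro z hz
        have : π z ∈ π '' Uᶜ := ⟨z, hz, rfl⟩
        simp only [hfc, ContinuousMap.comp_apply, ContinuousMap.coe_mk]
        rw [hf0 this]
        simp
      have : fc ∈ ({0} : Set C(X, ℂ)) := hpre ▸ hfcK
      rw [Set.mem_singleton_iff] at this
      have hfx : fc x = 1 := by
        simp only [hfc, ContinuousMap.comp_apply, ContinuousMap.coe_mk]
        rw [hf1 rfl]
        simp
      rw [this] at hfx
      simpa using hfx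
    · rintro rfl; exact K.zero_mem
  · intro hid F hF hFim
    by_contra hFne
    obtain ⟨y, hy⟩ : ∃ y, y ∉ F := by
      by_contra h
      push_neg at h
      exact hFne (Set.eq_univ_of_forall h)
    set K := ContinuousMap.idealOfSet ℂ Fᶜ with hKdef
    have hKcl : IsClosed (K : Set C(Y, ℂ)) := ContinuousMap.idealOfSet_closed ℂ Fᶜ
    have hpre : {f : C(X, ℂ) | f.comp ⟨π, hπc⟩ ∈ K} = {0} := by
      ext f
      simp only [Set.mem_setOf_eq, Set.mem_singleton_iff]
      constructor
      · intro hf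
        rw [hKdef, ContinuousMap.mem_idealOfSet] at hf
        ext x
        obtain ⟨z, hzF, rfl⟩ : ∃ z ∈ F, π z = x := by
          have : x ∈ π '' F := hFim ▸ Set.mem_univ x
          obtain ⟨z, hz, rfl⟩ := this
          exact ⟨z, hz, rfl⟩
        have := hf (by simpa using hzF)
        simpa using this
      · rintro rfl
        exact K.zero_mem
    have hK0 := hid K hKcl hpre
    obtain ⟨g, hg0, hg1, -⟩ := exists_continuous_zero_one_of_isClosed hF
      (isClosed_singleton (x := y)) (Set.disjoint_singleton_right.mpr hy)
    set gc : C(Y, ℂ) :=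
      (⟨Complex.ofReal, Complex.continuous_ofReal⟩ : C(ℝ, ℂ)).comp g with hgc
    have hgK : gc ∈ K := by
      rw [hKdef, ContinuousMap.mem_idealOfSet]
      intro z hz
      simp only [hgc, ContinuousMap.comp_apply, ContinuousMap.coe_mk]
      rw [hg0 (by simpa using hz)]
      simp
    have : gc = 0 := by
      have : gc ∈ ({0} : Set C(Y, ℂ)) := hK0 ▸ (hgK : gc ∈ (K : Set C(Y, ℂ)))
      simpa using this
    have hgy : gc y = 1 := by
      simp only [hgc, ContinuousMap.comp_apply, ContinuousMap.coe_mk]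
      rw [hg1 rfl]; simp
    rw [this] at hgy
    simpa using hgy
end

section
/- Let X and Y be compact Hausdorff spaces, let π : Y → X be an irreducible continuous surjection, and let α : C(X) → C(Y) be given by α(f) = f ∘ π. Then for every regular ideal J of C(X), supp(α(J)^⊥⊥) = int(cl(π⁻¹(supp(J)))). -/
open Set Topology

lemma mem_setAnn_iff' {Y : Type*} [TopologicalSpace Y] (T : Set C(Y, ℂ)) (f : C(Y, ℂ)) :
    f ∈ setAnn T ↔ ∀ y ∈ {y | ∃ g ∈ T, g y ≠ 0}, f y = 0 := by
  constructor
  · rintro hf y ⟨g, hg, hgy⟩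
    have h1 : f * g = 0 := hf g hg
    have h2 : f y * g y = 0 := by
      have := congrArg (fun h : C(Y, ℂ) => h y) h1
      simpa using this
    exact (mul_eq_zero.mp h2).resolve_right hgy
  · intro h g hg
    ext y
    simp only [ContinuousMap.mul_apply, ContinuousMap.zero_apply]
    by_cases hgy : g y = 0
    · rw [hgy, mul_zero]
    · rw [h y ⟨g, hg, hgy⟩, zero_mul]

lemma supp_setAnn' {Y : Type*} [TopologicalSpace Y] [CompactSpace Y] [T2Space Y]
    (T : Set C(Y, ℂ)) :
    suppIdeal (setAnn T) = (closure {y | ∃ g ∈ T, g y ≠ 0})ᶜ := by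
  ext x
  constructor
  · rintro ⟨f, hf, hfx⟩
    have hvan : Set.EqOn f 0 {y | ∃ g ∈ T, g y ≠ 0} := fun y hy =>
      (mem_setAnn_iff' T f).mp hf y hy
    have hcl : Set.EqOn f 0 (closure {y | ∃ g ∈ T, g y ≠ 0}) :=
      hvan.closure f.continuous continuous_const
    intro hx
    exact hfx (hcl hx)
  · intro hx
    obtain ⟨f, hf0, hf1, -⟩ := exists_continuous_zero_one_of_isClosed
      (isClosed_closure (s := {y | ∃ g ∈ T, g y ≠ 0})) (isClosed_singleton (x := x))
      (disjoint_singleton_right.mpr hx)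
    refine ⟨⟨fun y => (f y : ℂ), Complex.continuous_ofReal.comp f.continuous⟩, ?_, ?_⟩
    · rw [mem_setAnn_iff']
      intro y hy
      have : f y = 0 := hf0 (subset_closure hy)
      simp [this]
    · have : f x = 1 := hf1 rfl
      simp [this]

/-- Let `π : Y → X` be an irreducible continuous surjection of compact Hausdorff spaces
and `α : C(X) → C(Y)`, `α(f) = f ∘ π`.  Then for every regular ideal `J` of `C(X, ℂ)`,
`supp(α(J)^⊥⊥) = int(cl(π⁻¹(supp J)))`. -/
theorem stmt14 {X Y : Type*} [TopologicalSpace X] [CompactSpace X] [T2Space X]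
    [TopologicalSpace Y] [CompactSpace Y] [T2Space Y]
    (π : Y → X) (hπc : Continuous π) (hπs : Function.Surjective π)
    (hirr : ∀ F : Set Y, IsClosed F → π '' F = Set.univ → F = Set.univ) :
    ∀ J : Ideal C(X, ℂ), IsRegularIdeal J →
      suppIdeal (Upsilon ⟨π, hπc⟩ J) = interior (closure (π ⁻¹' suppIdeal J)) := by
  intro J _
  set S : Set C(Y, ℂ) := (fun f : C(X, ℂ) => f.comp ⟨π, hπc⟩) '' (J : Set C(X, ℂ)) with hS
  have hUS : {y | ∃ g ∈ S, g y ≠ 0} = π ⁻¹' suppIdeal J := by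
    ext y
    constructor
    · rintro ⟨g, ⟨f, hf, rfl⟩, hgy⟩
      exact ⟨f, hf, hgy⟩
    · rintro ⟨f, hf, hfy⟩
      exact ⟨f.comp ⟨π, hπc⟩, ⟨f, hf, rfl⟩, hfy⟩
  have h1 : suppIdeal (Upsilon ⟨π, hπc⟩ J) = (closure (suppIdeal (setAnn S)))ᶜ := by
    have := supp_setAnn' (Y := Y) ((setAnn S : Ideal C(Y, ℂ)) : Set C(Y, ℂ))
    rw [Upsilon, this]
    rfl
  rw [h1, supp_setAnn' S, hUS, closure_compl, compl_compl]
end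

section
/- Let X be a nonempty compact metric space that is perfect (X has no isolated points), and let C denote the Cantor space ℕ → Bool with the product topology (which is homeomorphic to the Cantor set). Then there is a Boolean algebra isomorphism (equivalently, an order isomorphism) between Ropen(X) and Ropen(C). -/
open Set Topology

set_option linter.unusedSectionVars false


namespace Stmt18Aux

lemma icic {Z : Type*} [TopologicalSpace Z] (A : Set Z) :
    interior (closure (interior (closure A))) = interior (closure A) :=
  subset_antisymm (interior_mono (closure_minimal interior_subset isClosed_closure))
    isOpen_interior.subset_interior_closure

structure IsTreeBase {Z : Type*} [TopologicalSpace Z] (U : List Bool → Set Z) : Prop where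
  opn : ∀ s, IsOpen (U s)
  ne : ∀ s, (U s).Nonempty
  step : ∀ s b, U (s ++ [b]) ⊆ U s
  disj : ∀ s, U (s ++ [true]) ∩ U (s ++ [false]) = ∅
  pibase : ∀ O : Set Z, IsOpen O → O.Nonempty → ∃ s, U s ⊆ O

variable {Z : Type*} [TopologicalSpace Z] {U : List Bool → Set Z}

lemma IsTreeBase.mono (hU : IsTreeBase U) {s t : List Bool} (h : s <+: t) : U t ⊆ U s := by
  obtain ⟨u, rfl⟩ := h
  induction u generalizing s with
  | nil => simp
  | cons b u ih =>
    have : s ++ b :: u = (s ++ [b]) ++ u := by simp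
    rw [this]
    exact (ih (s := s ++ [b])).trans (hU.step s b)

lemma IsTreeBase.disj' (hU : IsTreeBase U) {a b : Bool} (hab : a ≠ b) (s : List Bool) :
    U (s ++ [a]) ∩ U (s ++ [b]) = ∅ := by
  cases a <;> cases b <;> simp at hab ⊢
  · rw [Set.inter_comm]; exact hU.disj s
  · exact hU.disj s

lemma exists_disagree {s t : List Bool} (h1 : ¬ s <+: t) (h2 : ¬ t <+: s) :
    ∃ r a b, a ≠ b ∧ (r ++ [a]) <+: s ∧ (r ++ [b]) <+: t := by
  induction s generalizing t with
  | nil => exact absurd (List.nil_prefix) h1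
  | cons x s ih =>
    cases t with
    | nil => exact absurd (List.nil_prefix) h2
    | cons y t =>
      by_cases hxy : x = y
      · subst hxy
        have h1' : ¬ s <+: t := fun h => h1 (List.cons_prefix_cons.mpr ⟨rfl, h⟩)
        have h2' : ¬ t <+: s := fun h => h2 (List.cons_prefix_cons.mpr ⟨rfl, h⟩)
        obtain ⟨r, a, b, hab, ha, hb⟩ := ih h1' h2'
        exact ⟨x :: r, a, b, hab, by simpa [List.cons_prefix_cons] using ha,
          by simpa [List.cons_prefix_cons] using hb⟩
      · exact ⟨[], x, y, hxy, by simp, by simp⟩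

lemma IsTreeBase.incomp_disj (hU : IsTreeBase U) {s t : List Bool}
    (h1 : ¬ s <+: t) (h2 : ¬ t <+: s) : U s ∩ U t = ∅ := by
  obtain ⟨r, a, b, hab, ha, hb⟩ := exists_disagree h1 h2
  have := hU.disj' hab r
  exact Set.eq_empty_of_subset_empty (this ▸ Set.inter_subset_inter (hU.mono ha) (hU.mono hb))

lemma IsTreeBase.comp_of_nonempty (hU : IsTreeBase U) {s t : List Bool}
    (h : (U s ∩ U t).Nonempty) : s <+: t ∨ t <+: s := by
  by_contra hc
  push_neg at hc
  rw [hU.incomp_disj hc.1 hc.2] at h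
  exact Set.not_nonempty_empty h

lemma IsTreeBase.nonempty_of_comp (hU : IsTreeBase U) {s t : List Bool}
    (h : s <+: t ∨ t <+: s) : (U s ∩ U t).Nonempty := by
  rcases h with h | h
  · obtain ⟨y, hy⟩ := hU.ne t
    exact ⟨y, hU.mono h hy, hy⟩
  · obtain ⟨y, hy⟩ := hU.ne s
    exact ⟨y, hy, hU.mono h hy⟩

end Stmt18Aux
section Part2
namespace Stmt18Aux

variable {Z₁ Z₂ : Type*} [TopologicalSpace Z₁] [TopologicalSpace Z₂]
variable {U : List Bool → Set Z₁} {V : List Bool → Set Z₂}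

lemma transfer (hU : IsTreeBase U) (hV : IsTreeBase V) (T : Set (List Bool)) (t : List Bool)
    (h : U t ⊆ closure (⋃ s ∈ T, U s)) : V t ⊆ closure (⋃ s ∈ T, V s) := by
  by_contra hc
  rw [Set.not_subset] at hc
  obtain ⟨x, hxt, hxcl⟩ := hc
  have hO : IsOpen (V t ∩ (closure (⋃ s ∈ T, V s))ᶜ) := (hV.opn t).inter isClosed_closure.isOpen_compl
  obtain ⟨r, hr⟩ := hV.pibase _ hO ⟨x, hxt, hxcl⟩
  have hrt : V r ⊆ V t := fun y hy => (hr hy).1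
  -- r is incompatible with every s ∈ T
  have hincomp : ∀ s ∈ T, ¬ (r <+: s ∨ s <+: r) := by
    intro s hs hcmp
    obtain ⟨y, hy1, hy2⟩ := hV.nonempty_of_comp hcmp
    exact (hr hy1).2 (subset_closure (Set.mem_biUnion hs hy2))
  -- r and t are comparable
  have hcomp : r <+: t ∨ t <+: r := by
    apply hV.comp_of_nonempty
    obtain ⟨y, hy⟩ := hV.ne r
    exact ⟨y, hy, hrt hy⟩
  -- produce u ⊆ U t incompatible with everything in T
  obtain ⟨u, hut, huinc⟩ : ∃ u, U u ⊆ U t ∧ ∀ s ∈ T, ¬ (u <+: s ∨ s <+: u) := by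
    rcases hcomp with hc1 | hc1
    · refine ⟨t, subset_rfl, fun s hs hcmp => hincomp s hs ?_⟩
      rcases hcmp with h' | h'
      · exact Or.inl (hc1.trans h')
      · exact List.prefix_or_prefix_of_prefix hc1 h'
    · exact ⟨r, hU.mono hc1, hincomp⟩
  obtain ⟨y, hy⟩ := hU.ne u
  have hycl : y ∈ closure (⋃ s ∈ T, U s) := h (hut hy)
  rw [mem_closure_iff] at hycl
  obtain ⟨z, hz1, hz2⟩ := hycl (U u) (hU.opn u) hy
  obtain ⟨s, hs⟩ := Set.mem_iUnion.mp hz2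
  obtain ⟨hsT, hzs⟩ := Set.mem_iUnion.mp hs
  have := hU.incomp_disj (fun h' => huinc s hsT (Or.inl h')) (fun h' => huinc s hsT (Or.inr h'))
  exact absurd this (Set.nonempty_iff_ne_empty.mp ⟨z, hz1, hzs⟩)

end Stmt18Aux
end Part2
section Part3
namespace Stmt18Aux

variable {Z Z₁ Z₂ : Type*} [TopologicalSpace Z] [TopologicalSpace Z₁] [TopologicalSpace Z₂]
variable {U : List Bool → Set Z₁} {V : List Bool → Set Z₂}

lemma recon {U : List Bool → Set Z} (hU : IsTreeBase U) {W : Set Z}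
    (hW : W = interior (closure W)) :
    W = interior (closure (⋃ s ∈ {s | U s ⊆ W}, U s)) := by
  have hWo : IsOpen W := hW ▸ isOpen_interior
  apply subset_antisymm
  · have h1 : W ⊆ closure (⋃ s ∈ {s | U s ⊆ W}, U s) := by
      intro x hx
      rw [mem_closure_iff]
      intro O hO hxO
      obtain ⟨s, hs⟩ := hU.pibase (O ∩ W) (hO.inter hWo) ⟨x, hxO, hx⟩
      obtain ⟨y, hy⟩ := hU.ne s
      exact ⟨y, (hs hy).1, Set.mem_biUnion (fun z hz => (hs hz).2) hy⟩
    exact interior_maximal h1 hWo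
  · have h2 : (⋃ s ∈ {s | U s ⊆ W}, U s) ⊆ W := Set.iUnion₂_subset fun s hs => hs
    calc interior (closure (⋃ s ∈ {s | U s ⊆ W}, U s))
        ⊆ interior (closure W) := interior_mono (closure_mono h2)
      _ = W := hW.symm

/-- the forward map on sets -/
def phi (U : List Bool → Set Z₁) (V : List Bool → Set Z₂) (W : Set Z₁) : Set Z₂ :=
  interior (closure (⋃ s ∈ {s | U s ⊆ W}, V s))

lemma phi_mono (U : List Bool → Set Z₁) (V : List Bool → Set Z₂) {W W' : Set Z₁}
    (h : W ⊆ W') : phi U V W ⊆ phi U V W' := by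
  apply interior_mono; apply closure_mono
  exact Set.iUnion₂_mono' fun s hs => ⟨s, hs.trans h, subset_rfl⟩

lemma roundtrip (hU : IsTreeBase U) (hV : IsTreeBase V) {W : Set Z₂}
    (hW : W = interior (closure W)) : phi U V (phi V U W) = W := by
  set S : Set (List Bool) := {s | V s ⊆ W} with hS
  have hSsub : ∀ s ∈ S, U s ⊆ phi V U W := by
    intro s hs
    have h1 : U s ⊆ ⋃ t ∈ S, U t := Set.subset_biUnion_of_mem hs
    exact (hU.opn s).subset_interior_closure.trans (interior_mono (closure_mono h1))
  apply subset_antisymm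
  · -- phi U V (phi V U W) ⊆ W
    have key : ∀ t, U t ⊆ phi V U W → V t ⊆ closure (⋃ s ∈ S, V s) := by
      intro t ht
      exact transfer hU hV S t (ht.trans interior_subset)
    have h1 : (⋃ t ∈ {t | U t ⊆ phi V U W}, V t) ⊆ closure (⋃ s ∈ S, V s) :=
      Set.iUnion₂_subset fun t ht => key t ht
    calc phi U V (phi V U W)
        ⊆ interior (closure (closure (⋃ s ∈ S, V s))) := interior_mono (closure_mono h1)
      _ = interior (closure (⋃ s ∈ S, V s)) := by rw [closure_closure]
      _ = W := (recon hV hW).symm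
  · -- W ⊆ phi U V (phi V U W)
    have h2 : (⋃ s ∈ S, V s) ⊆ ⋃ t ∈ {t | U t ⊆ phi V U W}, V t :=
      Set.iUnion₂_mono' fun s hs => ⟨s, hSsub s hs, subset_rfl⟩
    calc W = interior (closure (⋃ s ∈ S, V s)) := recon hV hW
      _ ⊆ phi U V (phi V U W) := interior_mono (closure_mono h2)

end Stmt18Aux
end Part3
section Part4
namespace Stmt18Aux

variable {Z₁ Z₂ : Type*} [TopologicalSpace Z₁] [TopologicalSpace Z₂]

/-- Two spaces with binary tree π-bases have order-isomorphic regular open algebras. -/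
noncomputable def treeBaseIso {U : List Bool → Set Z₁} {V : List Bool → Set Z₂}
    (hU : IsTreeBase U) (hV : IsTreeBase V) :
    ({W : Set Z₁ // W = interior (closure W)} ≃o {W : Set Z₂ // W = interior (closure W)}) where
  toFun W := ⟨phi U V W.1, (icic _).symm⟩
  invFun W := ⟨phi V U W.1, (icic _).symm⟩
  left_inv W := Subtype.ext (roundtrip hV hU W.2)
  right_inv W := Subtype.ext (roundtrip hU hV W.2)
  map_rel_iff' {W W'} := by
    constructor
    · intro h
      have h2 : phi V U (phi U V W.1) ⊆ phi V U (phi U V W'.1) := phi_mono V U h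
      rw [roundtrip hV hU W.2, roundtrip hV hU W'.2] at h2
      exact h2
    · intro h
      exact phi_mono U V h

end Stmt18Aux
end Part4
section Part5
namespace Stmt18Aux

/-- cylinders in Cantor space -/
def cyl (s : List Bool) : Set (ℕ → Bool) :=
  ⋂ i ∈ Finset.range s.length, {x : ℕ → Bool | x i = s.getD i true}

lemma mem_cyl {s : List Bool} {x : ℕ → Bool} :
    x ∈ cyl s ↔ ∀ i < s.length, x i = s.getD i true := by
  simp [cyl]

lemma getD_append {s : List Bool} {b : Bool} {i : ℕ} (h : i < s.length) :
    (s ++ [b]).getD i true = s.getD i true := by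
  rw [List.getD_eq_getElem?_getD, List.getD_eq_getElem?_getD, List.getElem?_append, if_pos h]

lemma cantorTreeBase : IsTreeBase cyl where
  opn s := by
    refine isOpen_biInter_finset (fun i _ => ?_)
    have h : {x : ℕ → Bool | x i = s.getD i true} = (fun x : ℕ → Bool => x i) ⁻¹' {s.getD i true} := rfl
    rw [h]
    exact (continuous_apply i).isOpen_preimage _ (isOpen_discrete _)
  ne s := ⟨fun i => s.getD i true, mem_cyl.mpr fun i _ => rfl⟩
  step s b := by
    intro x hx
    rw [mem_cyl] at hx ⊢
    intro i hi
    have := hx i (by simp; omega)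
    rwa [getD_append hi] at this
  disj s := by
    ext x
    simp only [Set.mem_inter_iff, Set.mem_empty_iff_false, iff_false, not_and]
    intro h1 h2
    have e1 := mem_cyl.mp h1 s.length (by simp)
    have e2 := mem_cyl.mp h2 s.length (by simp)
    simp at e1 e2
    rw [e1] at e2
    exact absurd e2 (by decide)
  pibase O hO hOne := by
    obtain ⟨x, hx⟩ := hOne
    obtain ⟨I, u, hu, hsub⟩ := isOpen_pi_iff.mp hO x hx
    set n := I.sup id + 1 with hn
    refine ⟨(List.range n).map x, fun y hy => hsub ?_⟩
    have hlen : ((List.range n).map x).length = n := by simp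
    rw [Set.mem_pi]
    intro i hi
    have hilt : i < n := Nat.lt_succ_of_le (Finset.le_sup (f := id) hi)
    have := mem_cyl.mp hy i (by rwa [hlen])
    have hgd : ((List.range n).map x).getD i true = x i := by
      simp [List.getD_eq_getElem?_getD, List.getElem?_map, hilt]
    rw [this, hgd]
    exact (hu i hi).2

end Stmt18Aux
end Part5
section Part6
namespace Stmt18Aux

def treeAux {α : Type*} (f : Set α → ℕ → Bool → Set α) (s : List Bool) : Set α × ℕ :=
  s.foldl (fun p b => (f p.1 p.2 b, p.2 + 1)) (Set.univ, 0)

lemma treeAux_append {α : Type*} (f : Set α → ℕ → Bool → Set α) (s : List Bool) (b : Bool) :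
    treeAux f (s ++ [b]) = (f (treeAux f s).1 (treeAux f s).2 b, (treeAux f s).2 + 1) := by
  simp [treeAux, List.foldl_append]

lemma treeAux_len {α : Type*} (f : Set α → ℕ → Bool → Set α) (s : List Bool) :
    (treeAux f s).2 = s.length := by
  induction s using List.reverseRecOn with
  | nil => rfl
  | append_singleton s b ih => rw [treeAux_append]; simp [ih]

variable {X : Type*} [MetricSpace X] [CompactSpace X] [Nonempty X]

lemma exists_treeBase (hperf : ∀ x : X, ¬ IsOpen ({x} : Set X)) :
    ∃ U : List Bool → Set X, IsTreeBase U := by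
  classical
  -- every nonempty open set has at least two points
  have twopts : ∀ (W : Set X), IsOpen W → ∀ x ∈ W, ∃ y ∈ W, y ≠ x := by
    intro W hWo x hx
    by_contra hc
    push_neg at hc
    have hWx : W = {x} := subset_antisymm (fun y hy => hc y hy) (by simpa using hx)
    exact hperf x (hWx ▸ hWo)
  -- a countable basis, enumerated
  obtain ⟨bb, hbc, hbne, hbb⟩ := TopologicalSpace.exists_countable_basis X
  have hbnonempty : bb.Nonempty := by
    by_contra h
    rw [Set.not_nonempty_iff_eq_empty] at h
    obtain ⟨x⟩ := ‹Nonempty X›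
    have hx : x ∈ ⋃₀ bb := hbb.sUnion_eq ▸ Set.mem_univ x
    rw [h] at hx
    simpa using hx
  obtain ⟨B, hB⟩ := Set.Countable.exists_eq_range hbc hbnonempty
  have hBo : ∀ n, IsOpen (B n) := fun n => hbb.isOpen (hB ▸ Set.mem_range_self n)
  have hBbasis : ∀ (O : Set X), IsOpen O → ∀ x ∈ O, ∃ n, x ∈ B n ∧ B n ⊆ O := by
    intro O hO x hx
    obtain ⟨v, hv, hxv, hvO⟩ := hbb.exists_subset_of_mem_open hx hO
    rw [hB] at hv
    obtain ⟨n, rfl⟩ := hv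
    exact ⟨n, hxv, hvO⟩
  -- the splitting function
  have hsplit : ∀ (A : Set X) (n : ℕ), ∃ c : Bool → Set X, IsOpen A → A.Nonempty →
      (∀ b, IsOpen (c b)) ∧ (∀ b, (c b).Nonempty) ∧ (∀ b, c b ⊆ A) ∧
      (c true ∩ c false = ∅) ∧ A ⊆ closure (c true ∪ c false) ∧
      ((A ∩ B n).Nonempty → c true ⊆ B n) := by
    intro A n
    by_cases hA : IsOpen A ∧ A.Nonempty
    case neg => exact ⟨fun _ => A, fun h1 h2 => absurd ⟨h1, h2⟩ hA⟩
    obtain ⟨hAo, hAne⟩ := hA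
    set W := if (A ∩ B n).Nonempty then A ∩ B n else A with hW
    have hWo : IsOpen W := by rw [hW]; split_ifs; exacts [hAo.inter (hBo n), hAo]
    have hWne : W.Nonempty := by rw [hW]; split_ifs with h; exacts [h, hAne]
    have hWA : W ⊆ A := by rw [hW]; split_ifs; exacts [Set.inter_subset_left, subset_rfl]
    obtain ⟨x, hx⟩ := hWne
    obtain ⟨y, hyA, hyx⟩ := twopts A hAo x (hWA hx)
    obtain ⟨ε, hε, hball⟩ := Metric.isOpen_iff.mp hWo x hx
    set r := min ε (dist y x) / 2 with hr
    have hm : 0 < min ε (dist y x) := lt_min hε (dist_pos.mpr hyx)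
    have hr0 : 0 < r := half_pos hm
    have hrε : r < ε := lt_of_lt_of_le (half_lt_self hm) (min_le_left _ _)
    have hrd : r < dist y x := lt_of_lt_of_le (half_lt_self hm) (min_le_right _ _)
    have hballW : Metric.ball x r ⊆ W := (Metric.ball_subset_ball hrε.le).trans hball
    have hynotin : y ∉ closure (Metric.ball x r) := by
      intro hy
      have h1 : y ∈ Metric.closedBall x r := Metric.closure_ball_subset_closedBall hy
      rw [Metric.mem_closedBall] at h1
      exact absurd h1 (not_le.mpr hrd)
    refine ⟨fun b => Bool.rec (A ∩ (closure (Metric.ball x r))ᶜ) (Metric.ball x r) b,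
      fun _ _ => ⟨?_, ?_, ?_, ?_, ?_, ?_⟩⟩
    · intro b
      cases b
      · exact hAo.inter isClosed_closure.isOpen_compl
      · exact Metric.isOpen_ball
    · intro b
      cases b
      · exact ⟨y, hyA, hynotin⟩
      · exact ⟨x, Metric.mem_ball_self hr0⟩
    · intro b
      cases b
      · exact Set.inter_subset_left
      · exact hballW.trans hWA
    · apply Set.eq_empty_of_subset_empty
      rintro z ⟨h1, h2⟩
      exact absurd (subset_closure h1) h2.2
    · intro z hz
      by_cases hzc : z ∈ closure (Metric.ball x r)
      · exact closure_mono Set.subset_union_left hzc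
      · exact subset_closure (Or.inr ⟨hz, hzc⟩)
    · intro h
      have hWeq : W = A ∩ B n := if_pos h
      exact hballW.trans (hWeq ▸ Set.inter_subset_right)
  choose f hf using hsplit
  -- the tree of open sets
  set G : List Bool → Set X × ℕ := treeAux f with hG
  have hGapp : ∀ s b, G (s ++ [b]) = (f (G s).1 (G s).2 b, (G s).2 + 1) :=
    fun s b => treeAux_append f s b
  have hGlen : ∀ s, (G s).2 = s.length := fun s => treeAux_len f s
  have hGnil : G [] = (Set.univ, 0) := rfl
  have hGopen : ∀ s, IsOpen (G s).1 ∧ (G s).1.Nonempty := by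
    intro s
    induction s using List.reverseRecOn with
    | nil => rw [hGnil]; exact ⟨isOpen_univ, Set.univ_nonempty⟩
    | append_singleton s b ih =>
      rw [hGapp]
      obtain ⟨h1, h2, -⟩ := hf (G s).1 (G s).2 ih.1 ih.2
      exact ⟨h1 b, h2 b⟩
  have hprops : ∀ s, (∀ b, IsOpen (f (G s).1 (G s).2 b)) ∧
      (∀ b, (f (G s).1 (G s).2 b).Nonempty) ∧ (∀ b, f (G s).1 (G s).2 b ⊆ (G s).1) ∧
      (f (G s).1 (G s).2 true ∩ f (G s).1 (G s).2 false = ∅) ∧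
      (G s).1 ⊆ closure (f (G s).1 (G s).2 true ∪ f (G s).1 (G s).2 false) ∧
      (((G s).1 ∩ B (G s).2).Nonempty → f (G s).1 (G s).2 true ⊆ B (G s).2) :=
    fun s => hf (G s).1 (G s).2 (hGopen s).1 (hGopen s).2
  -- level density
  have hlevel : ∀ n (O : Set X), IsOpen O → O.Nonempty →
      ∃ s : List Bool, s.length = n ∧ ((G s).1 ∩ O).Nonempty := by
    intro n
    induction n with
    | zero =>
      intro O hO hOne
      exact ⟨[], rfl, by rw [hGnil]; simpa using hOne⟩
    | succ n ih =>
      intro O hO hOne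
      obtain ⟨s, hslen, z, hz1, hz2⟩ := ih O hO hOne
      obtain ⟨-, -, -, -, hdense, -⟩ := hprops s
      have hzcl := hdense hz1
      rw [mem_closure_iff] at hzcl
      obtain ⟨w, hw1, hw2⟩ := hzcl O hO hz2
      rcases hw2 with hw2 | hw2
      · exact ⟨s ++ [true], by simp [hslen], ⟨w, by rw [hGapp]; exact hw2, hw1⟩⟩
      · exact ⟨s ++ [false], by simp [hslen], ⟨w, by rw [hGapp]; exact hw2, hw1⟩⟩
  refine ⟨fun s => (G s).1, ?_, ?_, ?_, ?_, ?_⟩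
  · exact fun s => (hGopen s).1
  · exact fun s => (hGopen s).2
  · intro s b
    rw [hGapp]
    exact (hprops s).2.2.1 b
  · intro s
    rw [hGapp, hGapp]
    exact (hprops s).2.2.2.1
  · -- π-base
    intro O hO hOne
    obtain ⟨x, hx⟩ := hOne
    obtain ⟨n, hxB, hBO⟩ := hBbasis O hO x hx
    obtain ⟨s, hslen, hsne⟩ := hlevel n (B n) (hBo n) ⟨x, hxB⟩
    refine ⟨s ++ [true], ?_⟩
    have hcap := (hprops s).2.2.2.2.2
    rw [hGlen s, hslen] at hcap
    rw [hGapp]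
    show f (G s).1 (G s).2 true ⊆ O
    rw [hGlen s, hslen]
    exact (hcap hsne).trans hBO

end Stmt18Aux
end Part6

/-- Let `X` be a nonempty, perfect (no isolated points), compact metric space, and let
`C = ℕ → Bool` be the Cantor space.  Then `Ropen(X)` and `Ropen(C)` are isomorphic
Boolean algebras (equivalently, order isomorphic). -/
theorem stmt18 {X : Type*} [MetricSpace X] [CompactSpace X] [Nonempty X]
    (hperf : ∀ x : X, ¬ IsOpen ({x} : Set X)) :
    Nonempty (Ropen X ≃o Ropen (ℕ → Bool)) := by
  obtain ⟨U, hU⟩ := Stmt18Aux.exists_treeBase hperf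
  exact ⟨Stmt18Aux.treeBaseIso hU Stmt18Aux.cantorTreeBase⟩
end
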